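/- arXiv:1405.2531 — 11 statements merged into one kernel-verified Lean document; each statement's English description precedes it below -/
import Mathlib

section
/- Let A be a ring and T an A-module such that Ext^1_A(T, M) = 0 for every module M generated by T (i.e. every epimorphic image of a direct sum of copies of T). Then the pair (Gen(T), T°) is a torsion pair in Mod(A), where Gen(T) is the class of T-generated modules and T° = {N : Hom_A(T, N) = 0}. -/
universe u

open CategoryTheory CategoryTheory.Limits Function

variable {A : Type u} [Ring A]

/-- The class of `T`-generated modules: epimorphic images of direct sums of copies of `T`. -/
def Gen (T : ModuleCat.{u} A) : Set (ModuleCat.{u} A) :=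
  {N | ∃ (I : Type u) (f : ModuleCat.of A (I →₀ T) ⟶ N), Surjective f}

/-- `Ext¹_A(T, N) = 0`: every short exact sequence `0 → N → E → T → 0` splits. -/
def Ext1Zero (T N : ModuleCat.{u} A) : Prop :=
  ∀ (E : ModuleCat.{u} A) (i : N ⟶ E) (p : E ⟶ T),
    Injective i → Surjective p → Function.Exact ⇑i ⇑p → ∃ s : T ⟶ E, s ≫ p = 𝟙 T

/-- `T° = {N | Hom_A(T,N) = 0}`. -/
def Tcirc (T : ModuleCat.{u} A) : Set (ModuleCat.{u} A) :=
  {N | ∀ f : T ⟶ N, f = 0}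

/-- `T`-presented modules: an epimorphism from a direct sum of copies of `T` with kernel
generated by `T`. -/
def Pres (T : ModuleCat.{u} A) : Set (ModuleCat.{u} A) :=
  {N | ∃ (I : Type u) (f : ModuleCat.of A (I →₀ T) ⟶ N), Surjective f ∧
    ModuleCat.of A (LinearMap.ker f.hom) ∈ Gen T}

/-- `𝒟_σ`: modules `X` such that `Hom_A(σ, X)` is surjective. -/
def Dclass {P Q : ModuleCat.{u} A} (σ : P ⟶ Q) : Set (ModuleCat.{u} A) :=
  {X | Surjective (fun g : Q ⟶ X => σ ≫ g)}

/-- `Add T`: direct summands of direct sums of copies of `T`. -/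
def AddCl (T : ModuleCat.{u} A) : Set (ModuleCat.{u} A) :=
  {M | ∃ (I : Type u) (s : M ⟶ ModuleCat.of A (I →₀ T))
      (r : ModuleCat.of A (I →₀ T) ⟶ M), s ≫ r = 𝟙 M}

/-!
Hom from `Gen T` to `T°` vanishes because a map out of a quotient of `T^(I)` is determined by its
restrictions to the copies of `T`. For the torsion part of `M` take the trace of `T` in `M`, the sum
`S` of all images of maps `T → M`; it is `T`-generated. Given `f : T → M/S`, the pullback
`E = M ×_{M/S} T` is an extension of `T` by `S`, so it splits since `Ext¹(T, S) = 0`; the splitting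
lifts `f` to a map `g : T → M`, whose image lies in `S`, so `f = 0`.
-/

lemma hom_eq_zero_of_mem_Gen_of_mem_Tcirc {T X Y : ModuleCat.{u} A} (hX : X ∈ Gen T)
    (hY : Y ∈ Tcirc T) (f : X ⟶ Y) : f = 0 := by
  obtain ⟨I, g, hg⟩ := hX
  have hgf : f.hom ∘ₗ g.hom = 0 :=
    Finsupp.lhom_ext' fun i ↦ congrArg ModuleCat.Hom.hom
      (hY (ModuleCat.ofHom (f.hom ∘ₗ g.hom ∘ₗ Finsupp.lsingle i)))
  ext x
  obtain ⟨w, rfl⟩ := hg x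
  exact LinearMap.congr_fun hgf w

section Trace

variable (A) (T M : Type u) [AddCommGroup T] [Module A T] [AddCommGroup M] [Module A M]

def traceSubmodule : Submodule A M :=
  ⨆ φ : T →ₗ[A] M, LinearMap.range φ

variable {A T M}

lemma range_le_traceSubmodule (φ : T →ₗ[A] M) : LinearMap.range φ ≤ traceSubmodule A T M :=
  le_iSup (fun φ : T →ₗ[A] M ↦ LinearMap.range φ) φ

lemma range_lsum_eq_traceSubmodule :
    LinearMap.range (Finsupp.lsum ℕ fun φ : T →ₗ[A] M ↦ φ) = traceSubmodule A T M := by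
  refine le_antisymm ?_ (iSup_le fun φ ↦ ?_)
  · rintro _ ⟨x, rfl⟩
    rw [Finsupp.lsum_apply]
    exact Submodule.finsuppSum_mem _ _ _ _ fun φ _ ↦ range_le_traceSubmodule φ ⟨_, rfl⟩
  · rintro _ ⟨t, rfl⟩
    exact ⟨Finsupp.single φ t, by simp⟩

end Trace

lemma traceSubmodule_mem_Gen (T M : ModuleCat.{u} A) :
    ModuleCat.of A (traceSubmodule A T M) ∈ Gen T := by
  let F := Finsupp.lsum ℕ fun φ : T →ₗ[A] M ↦ φ
  have hF : ∀ x, F x ∈ traceSubmodule A T M := fun x ↦ by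
    rw [← range_lsum_eq_traceSubmodule]
    exact LinearMap.mem_range_self F x
  refine ⟨T →ₗ[A] M, ModuleCat.ofHom (F.codRestrict _ hF), ?_⟩
  rintro ⟨s, hs⟩
  obtain ⟨x, hx⟩ := range_lsum_eq_traceSubmodule.ge hs
  exact ⟨x, Subtype.ext hx⟩

lemma exists_mkQ_comp_eq_of_Ext1Zero {T M : ModuleCat.{u} A} {S : Submodule A M}
    (hS : Ext1Zero T (ModuleCat.of A S)) (f : T →ₗ[A] M ⧸ S) :
    ∃ g : T →ₗ[A] M, S.mkQ ∘ₗ g = f := by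
  let E := LinearMap.eqLocus (S.mkQ ∘ₗ LinearMap.fst A M T) (f ∘ₗ LinearMap.snd A M T)
  have mem_E (e : M × T) : e ∈ E ↔ S.mkQ e.1 = f e.2 := LinearMap.mem_eqLocus
  let i : ModuleCat.of A S ⟶ ModuleCat.of A E := ModuleCat.ofHom <|
    (LinearMap.inl A M T ∘ₗ S.subtype).codRestrict E fun m ↦ by
      simp [mem_E, (Submodule.Quotient.mk_eq_zero S).2 m.2]
  let p : ModuleCat.of A E ⟶ T := ModuleCat.ofHom (LinearMap.snd A M T ∘ₗ E.subtype)
  have hi : Injective i := fun m m' h ↦ Subtype.ext (congrArg (fun e : E ↦ e.1.1) h)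
  have hp : Surjective p := fun t ↦ by
    obtain ⟨m, hm⟩ := S.mkQ_surjective (f t)
    exact ⟨⟨(m, t), (mem_E _).2 hm⟩, rfl⟩
  have hip : Function.Exact i p := by
    rintro ⟨⟨m, t⟩, hmt⟩
    refine ⟨fun (ht : t = 0) ↦ ?_, ?_⟩
    · subst ht
      have hm : m ∈ S := by simpa [mem_E] using hmt
      exact ⟨⟨m, hm⟩, rfl⟩
    · rintro ⟨m', hm'⟩
      exact (congrArg (fun e : E ↦ e.1.2) hm').symm
  obtain ⟨s, hs⟩ := hS _ i p hi hp hip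
  refine ⟨LinearMap.fst A M T ∘ₗ E.subtype ∘ₗ s.hom, LinearMap.ext fun t ↦ ?_⟩
  have hst : (s t).1.2 = t := congrArg (fun h : T ⟶ T ↦ h.hom t) hs
  simpa [hst] using (mem_E _).1 (s t).2

lemma quotient_traceSubmodule_mem_Tcirc {T M : ModuleCat.{u} A}
    (hT : Ext1Zero T (ModuleCat.of A (traceSubmodule A T M))) :
    ModuleCat.of A (M ⧸ traceSubmodule A T M) ∈ Tcirc T := by
  intro f
  obtain ⟨g, hg⟩ := exists_mkQ_comp_eq_of_Ext1Zero hT f.hom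
  ext t
  rw [ModuleCat.hom_zero, LinearMap.zero_apply, ← hg]
  exact (Submodule.Quotient.mk_eq_zero _).2 (range_le_traceSubmodule g ⟨t, rfl⟩)

/-- If `Ext¹_A(T, M) = 0` for every `T`-generated module `M`, then `(Gen T, T°)` is a
torsion pair in `Mod A`. -/
theorem stmt_0 (T : ModuleCat.{u} A) (hExt : ∀ N ∈ Gen T, Ext1Zero T N) :
    (∀ X ∈ Gen T, ∀ Y ∈ Tcirc T, ∀ f : X ⟶ Y, f = 0) ∧
    (∀ M : ModuleCat.{u} A, ∃ S : Submodule A M,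
      ModuleCat.of A S ∈ Gen T ∧ ModuleCat.of A (M ⧸ S) ∈ Tcirc T) :=
  ⟨fun _ hX _ hY f ↦ hom_eq_zero_of_mem_Gen_of_mem_Tcirc hX hY f, fun M ↦
    ⟨traceSubmodule A T M, traceSubmodule_mem_Gen T M,
      quotient_traceSubmodule_mem_Tcirc (hExt _ (traceSubmodule_mem_Gen T M))⟩⟩
end

section
/- Let T be an A-module such that Ext^1_A(T, Gen(T)) = 0. Then for every module M, the trace τ_T(M) (the sum of images of all homomorphisms T → M) satisfies Hom_A(T, M/τ_T(M)) = 0. -/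
/-!
The trace `τ_T(M)` is the image of `T^(Hom(T, M)) → M`, so it lies in `Gen T` and
`Ext¹(T, τ_T(M)) = 0`. Hence every `g : T → M ⧸ τ_T(M)` lifts along the quotient map to some
`h : T → M`; but the image of `h` lies in `τ_T(M)` by the definition of the trace, so `g = 0`.
-/

universe u

open CategoryTheory CategoryTheory.Limits Function

variable {A : Type u} [Ring A]

theorem Finsupp.range_lsum_eq_iSup {N P ι : Type*} [AddCommGroup N] [Module A N]
    [AddCommGroup P] [Module A P] (f : ι → N →ₗ[A] P) :
    LinearMap.range (Finsupp.lsum ℕ f) = ⨆ i, LinearMap.range (f i) := by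
  refine le_antisymm ?_ (iSup_le fun i => ?_)
  · rintro _ ⟨x, rfl⟩
    exact Submodule.sum_mem _ fun i _ => Submodule.mem_iSup_of_mem i ⟨x i, rfl⟩
  · rintro _ ⟨t, rfl⟩
    exact ⟨Finsupp.single i t, by simp⟩

section Gen

variable {T M : ModuleCat.{u} A}

theorem range_mem_Gen {I : Type u} (φ : (I →₀ T) →ₗ[A] M) :
    ModuleCat.of A (LinearMap.range φ) ∈ Gen T :=
  ⟨I, ModuleCat.ofHom φ.rangeRestrict, φ.surjective_rangeRestrict⟩

theorem iSup_range_mem_Gen {I : Type u} (f : I → (T ⟶ M)) :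
    ModuleCat.of A ↥(⨆ i, LinearMap.range (f i).hom) ∈ Gen T := by
  rw [← Finsupp.range_lsum_eq_iSup]
  exact range_mem_Gen _

end Gen

namespace Submodule

variable {T M : ModuleCat.{u} A} (K : Submodule A M) (g : T ⟶ ModuleCat.of A (M ⧸ K))

/-- The pullback `M ×_{M ⧸ K} T`, an extension of `T` by `K`. -/
def pullbackMkQ : Submodule A (M × T) :=
  LinearMap.ker (K.mkQ.comp (LinearMap.fst A M T) - g.hom.comp (LinearMap.snd A M T))

variable {K g}

theorem mem_pullbackMkQ {x : M × T} : x ∈ K.pullbackMkQ g ↔ K.mkQ x.1 = g x.2 := by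
  simp [pullbackMkQ, sub_eq_zero]

variable (K g)

def pullbackMkQInl : ModuleCat.of A K ⟶ ModuleCat.of A (K.pullbackMkQ g) :=
  ModuleCat.ofHom <| LinearMap.codRestrict _ ((LinearMap.inl A M T).comp K.subtype) fun m =>
    mem_pullbackMkQ.2 (by simp)

def pullbackMkQSnd : ModuleCat.of A (K.pullbackMkQ g) ⟶ T :=
  ModuleCat.ofHom <| (LinearMap.snd A M T).comp (K.pullbackMkQ g).subtype

theorem injective_pullbackMkQInl : Injective (K.pullbackMkQInl g) :=
  fun _ _ h => Subtype.ext (congrArg (Prod.fst ∘ Subtype.val) h)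

theorem surjective_pullbackMkQSnd : Surjective (K.pullbackMkQSnd g) := by
  intro t
  obtain ⟨m, hm⟩ := K.mkQ_surjective (g t)
  exact ⟨⟨(m, t), mem_pullbackMkQ.2 hm⟩, rfl⟩

theorem exact_pullbackMkQInl_pullbackMkQSnd :
    Function.Exact (K.pullbackMkQInl g) (K.pullbackMkQSnd g) := by
  rintro ⟨⟨m, t⟩, hx⟩
  constructor
  · rintro (rfl : t = 0)
    have hm : m ∈ K := by simpa using mem_pullbackMkQ.1 hx
    exact ⟨⟨m, hm⟩, rfl⟩
  · rintro ⟨k, hk⟩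
    exact (congrArg (Prod.snd ∘ Subtype.val) hk).symm

/-- A section of the pullback extension, followed by the first projection, is the lift. -/
theorem exists_lift_mkQ_of_ext1Zero (hK : Ext1Zero T (ModuleCat.of A K)) :
    ∃ h : T ⟶ M, h ≫ ModuleCat.ofHom K.mkQ = g := by
  obtain ⟨s, hs⟩ := hK _ _ _ (K.injective_pullbackMkQInl g) (K.surjective_pullbackMkQSnd g)
    (K.exact_pullbackMkQInl_pullbackMkQSnd g)
  refine ⟨s ≫ ModuleCat.ofHom ((LinearMap.fst A M T).comp (K.pullbackMkQ g).subtype), ?_⟩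
  ext t
  have hst : (s t).val.2 = t := congrArg (fun f => f.hom t) hs
  simpa [hst] using mem_pullbackMkQ.1 (s t).2

end Submodule

/-- If `Ext¹_A(T, Gen T) = 0`, then for every module `M` the trace
`τ_T(M) = ⨆ f : T → M, im f` satisfies `Hom_A(T, M / τ_T(M)) = 0`. -/
theorem stmt_1 (T : ModuleCat.{u} A) (hExt : ∀ X ∈ Gen T, Ext1Zero T X)
    (M : ModuleCat.{u} A) :
    ∀ g : T ⟶ ModuleCat.of A (M ⧸ (⨆ f : T ⟶ M, LinearMap.range f.hom)), g = 0 := by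
  intro g
  obtain ⟨h, rfl⟩ := Submodule.exists_lift_mkQ_of_ext1Zero _ g
    (hExt _ (iSup_range_mem_Gen fun f : T ⟶ M => f))
  ext t
  simpa using Submodule.mem_iSup_of_mem h (LinearMap.mem_range_self h.hom t)
end

section
/- Let T be an A-module satisfying: (i) Pres(T) = Gen(T), and (ii) Ext^1_A(T, X) = 0 for all X ∈ Gen(T). Then Gen(T) equals the class of modules N such that N embeds into some module of Gen(T) and Ext^1_A(T, N) = 0. -/
universe u

open CategoryTheory CategoryTheory.Limits Function

variable {A : Type u} [Ring A]

/-! Let `N ⊆ M` with `M ∈ Gen T` and `Ext¹(T, N) = 0`. Since `M/N ∈ Gen T = Pres T`, there is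
an epimorphism `ψ : T^(K) → M/N` with `ker ψ ∈ Gen T`, so also `Ext¹(T, ker ψ) = 0`. Maps out of
`T^(I)` lift along epimorphisms whose kernel `X` has `Ext¹(T, X) = 0`; hence `ψ` lifts to
`φ : T^(K) → M`, and for an epimorphism `f : T^(I) → M` the composite `T^(I) → M/N` lifts to
`g : T^(I) → T^(K)`. Then `f - φ g` and `φ` restricted to `ker ψ` both land in `N` and jointly
cover it, so `N` is an image of `T^(I) ⊕ ker ψ ∈ Gen T`. -/

lemma mem_gen_of_surjective {T M N : ModuleCat.{u} A} (hM : M ∈ Gen T) (g : M ⟶ N)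
    (hg : Surjective g) : N ∈ Gen T := by
  obtain ⟨I, f, hf⟩ := hM
  exact ⟨I, f ≫ g, hg.comp hf⟩

lemma free_mem_gen (T : ModuleCat.{u} A) (I : Type u) : ModuleCat.of A (I →₀ T) ∈ Gen T :=
  ⟨I, 𝟙 _, surjective_id⟩

lemma prod_mem_gen {T X Y : ModuleCat.{u} A} (hX : X ∈ Gen T) (hY : Y ∈ Gen T) :
    ModuleCat.of A (X × Y) ∈ Gen T := by
  obtain ⟨I, f, hf⟩ := hX
  obtain ⟨J, g, hg⟩ := hY
  exact ⟨I ⊕ J, ModuleCat.ofHom ((f.hom.prodMap g.hom) ∘ₗ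
    (Finsupp.sumFinsuppLEquivProdFinsupp A).toLinearMap),
    (hf.prodMap hg).comp (Finsupp.sumFinsuppLEquivProdFinsupp A).surjective⟩

lemma mem_gen_of_range_eq {T N M X : ModuleCat.{u} A} (hX : X ∈ Gen T) (ι : N ⟶ M)
    (hι : Injective ι) (h : X ⟶ M) (hrange : LinearMap.range h.hom = LinearMap.range ι.hom) :
    N ∈ Gen T := by
  let h' := h.hom.codRestrict (LinearMap.range ι.hom) fun x =>
    hrange ▸ LinearMap.mem_range_self _ x
  refine mem_gen_of_surjective hX
    (ModuleCat.ofHom ((LinearEquiv.ofInjective ι.hom hι).symm.toLinearMap ∘ₗ h')) ?_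
  have hh' : Surjective h' := by
    rintro ⟨y, hy⟩
    obtain ⟨x, rfl⟩ := hrange ▸ hy
    exact ⟨x, rfl⟩
  exact (LinearEquiv.ofInjective ι.hom hι).symm.surjective.comp hh'

lemma exists_lift_of_ext1Zero {T K P M : ModuleCat.{u} A} {i : K ⟶ P} {p : P ⟶ M}
    (hi : Injective i) (hp : Surjective p) (hip : Function.Exact i p) (hK : Ext1Zero T K)
    (h : T ⟶ M) : ∃ g : T ⟶ P, g ≫ p = h := by
  -- pull the extension `K → P → M` back along `h`; the pullback `K → E → T` splits
  let E : Submodule A (P × T) :=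
    LinearMap.ker (p.hom ∘ₗ LinearMap.fst A P T - h.hom ∘ₗ LinearMap.snd A P T)
  have mem_E {x : P × T} : x ∈ E ↔ p x.1 = h x.2 := by simp [E, sub_eq_zero]
  let i' : K ⟶ ModuleCat.of A E := ModuleCat.ofHom (LinearMap.codRestrict E
    (LinearMap.inl A P T ∘ₗ i.hom) fun k => mem_E.2 (by simp [hip.apply_apply_eq_zero]))
  let p' : ModuleCat.of A E ⟶ T := ModuleCat.ofHom (LinearMap.snd A P T ∘ₗ E.subtype)
  have hi' : Injective i' := fun a b hab => hi congr(($hab : P × T).1)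
  have hp' : Surjective p' := fun t => by
    obtain ⟨x, hx⟩ := hp (h t)
    exact ⟨⟨(x, t), mem_E.2 hx⟩, rfl⟩
  have hip' : Function.Exact i' p' := by
    rintro ⟨⟨x, t⟩, hxt⟩
    refine ⟨fun ht => ?_, ?_⟩
    · change t = 0 at ht
      subst ht
      obtain ⟨k, rfl⟩ := (hip x).1 (by simpa using mem_E.1 hxt)
      exact ⟨k, rfl⟩
    · rintro ⟨k, hk⟩
      exact congr(($hk.symm : P × T).2)
  obtain ⟨s, hs⟩ := hK _ i' p' hi' hp' hip'
  refine ⟨ModuleCat.ofHom (LinearMap.fst A P T ∘ₗ E.subtype ∘ₗ s.hom), ?_⟩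
  ext t
  have hst : ((s t : E) : P × T).2 = t := congr($hs t)
  simpa [hst] using mem_E.1 (s t).2

lemma exists_finsupp_lift_of_ext1Zero {T K P M : ModuleCat.{u} A} {i : K ⟶ P} {p : P ⟶ M}
    (hi : Injective i) (hp : Surjective p) (hip : Function.Exact i p) (hK : Ext1Zero T K)
    {I : Type u} (h : ModuleCat.of A (I →₀ T) ⟶ M) :
    ∃ g : ModuleCat.of A (I →₀ T) ⟶ P, g ≫ p = h := by
  choose g hg using fun j : I =>
    exists_lift_of_ext1Zero hi hp hip hK (ModuleCat.ofHom (Finsupp.lsingle j) ≫ h)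
  refine ⟨ModuleCat.ofHom (Finsupp.lsum ℕ fun j => (g j).hom), ?_⟩
  ext1
  refine Finsupp.lhom_ext fun j t => ?_
  simpa using congr($(hg j) t)

lemma mem_gen_of_presented_quotient {T N M : ModuleCat.{u} A} {ι : N ⟶ M} (hι : Injective ι)
    (hM : M ∈ Gen T) (hN : Ext1Zero T N) {K : Type u}
    {ψ : ModuleCat.of A (K →₀ T) ⟶ ModuleCat.of A (M ⧸ LinearMap.range ι.hom)}
    (hψ : Surjective ψ) (hker : ModuleCat.of A (LinearMap.ker ψ.hom) ∈ Gen T)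
    (hkerExt : Ext1Zero T (ModuleCat.of A (LinearMap.ker ψ.hom))) : N ∈ Gen T := by
  obtain ⟨I, f, hf⟩ := hM
  let π : M ⟶ ModuleCat.of A (M ⧸ LinearMap.range ι.hom) :=
    ModuleCat.ofHom (LinearMap.range ι.hom).mkQ
  have hιπ : Function.Exact ι π := LinearMap.exact_map_mkQ_range ι.hom
  obtain ⟨φ, hφ⟩ := exists_finsupp_lift_of_ext1Zero hι (Submodule.mkQ_surjective _) hιπ hN ψ
  obtain ⟨g, hg⟩ := exists_finsupp_lift_of_ext1Zero
    (i := ModuleCat.ofHom (LinearMap.ker ψ.hom).subtype) Subtype.val_injective hψ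
    (LinearMap.exact_subtype_ker_map ψ.hom) hkerExt (f ≫ π)
  have hφ' (y) : π (φ y) = ψ y := congr($hφ y)
  have hg' (x) : ψ (g x) = π (f x) := congr($hg x)
  refine mem_gen_of_range_eq (prod_mem_gen (free_mem_gen T I) hker) ι hι
    (ModuleCat.ofHom ((f.hom - φ.hom ∘ₗ g.hom) ∘ₗ LinearMap.fst A _ _ +
      φ.hom ∘ₗ (LinearMap.ker ψ.hom).subtype ∘ₗ LinearMap.snd A _ _)) ?_
  apply le_antisymm
  · rintro _ ⟨⟨x, k, hk⟩, rfl⟩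
    refine (hιπ _).1 ?_
    simp [hφ', hg', LinearMap.mem_ker.1 hk]
  · rintro _ ⟨n, rfl⟩
    obtain ⟨x, hx⟩ := hf (ι n)
    have hgx : g x ∈ LinearMap.ker ψ.hom := by
      rw [LinearMap.mem_ker, hg', hx]
      exact hιπ.apply_apply_eq_zero n
    exact ⟨(x, ⟨g x, hgx⟩), by simp [hx]⟩

/-- If `T` is quasitilting (`Pres T = Gen T` and `Ext¹(T, Gen T) = 0`), then `Gen T` equals
the class of modules embedding into a `T`-generated module and with `Ext¹_A(T, -) = 0`. -/
theorem stmt_2 (T : ModuleCat.{u} A) (hpres : Pres T = Gen T)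
    (hExt : ∀ X ∈ Gen T, Ext1Zero T X) :
    Gen T = {N | (∃ M ∈ Gen T, ∃ i : N ⟶ M, Injective i) ∧ Ext1Zero T N} := by
  ext N
  refine ⟨fun hN => ⟨⟨N, hN, 𝟙 N, injective_id⟩, hExt N hN⟩, ?_⟩
  rintro ⟨⟨M, hM, ι, hι⟩, hN⟩
  have hQ : ModuleCat.of A (M ⧸ LinearMap.range ι.hom) ∈ Pres T :=
    hpres ▸ mem_gen_of_surjective hM (ModuleCat.ofHom (LinearMap.range ι.hom).mkQ)
      (Submodule.mkQ_surjective _)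
  obtain ⟨K, ψ, hψ, hker⟩ := hQ
  exact mem_gen_of_presented_quotient hι hM hN hψ hker (hExt _ hker)
end

section
/- Every silting module is quasitilting: if T is an A-module with Gen(T) = 𝒟_σ for some projective presentation σ of T, then Pres(T) = Gen(T) and Ext^1_A(T, X) = 0 for all X ∈ Gen(T). -/
/-!
Write `T = coker σ` and `π : Q → T`. The class `𝒟_σ` is closed under the kernels of maps
`u : F → M` with `F ∈ 𝒟_σ` through which every map `T → M` factors: a map `h : P → ker u`
extends to `g : Q → F`, the composite `g ≫ u` kills `σ` and so factors as `π ≫ v`, and after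
lifting `v = w ≫ u` the map `g - π ≫ w` lands in `ker u` and extends `h`. Applied to the
universal map `T^(Hom(T, M)) → M` this gives `Pres T = Gen T`, since `Gen T = 𝒟_σ` contains
all direct sums of copies of `T`. For `Ext¹`, given `0 → X → E → T → 0`, lift `π` to
`q : Q → E`; then `σ ≫ q` lands in `X`, extends to `g : Q → X` as `X ∈ 𝒟_σ`, and
`q - g ≫ i` factors through `π` to a section.
-/

universe u

open CategoryTheory CategoryTheory.Limits Function

variable {A : Type u} [Ring A]

namespace ModuleCat

lemma exists_comp_eq_of_exact {X E Y Z : ModuleCat.{u} A} {i : X ⟶ E} {p : E ⟶ Y}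
    (hi : Injective i) (hip : Function.Exact i p) (f : Z ⟶ E) (hf : f ≫ p = 0) :
    ∃ g : Z ⟶ X, g ≫ i = f := by
  let S := ShortComplex.mk i p (hom_ext hip.linearMap_comp_eq_zero)
  have hS : S.Exact := (ShortComplex.ShortExact.moduleCat_exact_iff_function_exact S).mpr hip
  have : Mono i := (mono_iff_injective i).mpr hi
  exact ⟨hS.lift f hf, hS.lift_f f hf⟩

abbrev kerι {F M : ModuleCat.{u} A} (u : F ⟶ M) : of A (LinearMap.ker u.hom) ⟶ F :=
  ofHom (LinearMap.ker u.hom).subtype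

lemma kerι_comp {F M : ModuleCat.{u} A} (u : F ⟶ M) : kerι u ≫ u = 0 :=
  hom_ext u.hom.exact_subtype_ker_map.linearMap_comp_eq_zero

lemma exists_comp_kerι_eq {F M Z : ModuleCat.{u} A} (u : F ⟶ M) (f : Z ⟶ F) (hf : f ≫ u = 0) :
    ∃ g : Z ⟶ of A (LinearMap.ker u.hom), g ≫ kerι u = f :=
  exists_comp_eq_of_exact Subtype.val_injective u.hom.exact_subtype_ker_map f hf

end ModuleCat

open ModuleCat

section Dclass

variable {P Q : ModuleCat.{u} A} (σ : P ⟶ Q)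

lemma ker_mem_Dclass {F M : ModuleCat.{u} A} (u : F ⟶ M) (hF : F ∈ Dclass σ)
    (hu : ∀ v : cokernel σ ⟶ M, ∃ w, w ≫ u = v) :
    of A (LinearMap.ker u.hom) ∈ Dclass σ := by
  intro h
  obtain ⟨g, hg⟩ := hF (h ≫ kerι u)
  replace hg : σ ≫ g = h ≫ kerι u := hg
  have hgu : σ ≫ g ≫ u = 0 := by
    rw [← Category.assoc, hg, Category.assoc, kerι_comp, comp_zero]
  obtain ⟨w, hw⟩ := hu (cokernel.desc σ (g ≫ u) hgu)
  have hgw : (g - cokernel.π σ ≫ w) ≫ u = 0 := by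
    rw [Preadditive.sub_comp, Category.assoc, hw, cokernel.π_desc, sub_self]
  obtain ⟨k, hk⟩ := exists_comp_kerι_eq u _ hgw
  refine ⟨k, (cancel_mono (kerι u)).mp ?_⟩
  rw [Category.assoc, hk, Preadditive.comp_sub, cokernel.condition_assoc, zero_comp, sub_zero, hg]

lemma ext1Zero_of_mem_Dclass [Projective Q] {X : ModuleCat.{u} A} (hX : X ∈ Dclass σ) :
    Ext1Zero (cokernel σ) X := by
  intro E i p hi hp hip
  have : Epi p := (epi_iff_surjective p).mpr hp
  let q := Projective.factorThru (cokernel.π σ) p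
  have hqp : q ≫ p = cokernel.π σ := Projective.factorThru_comp _ _
  obtain ⟨h, hh⟩ := exists_comp_eq_of_exact hi hip (σ ≫ q) (by
    rw [Category.assoc, hqp, cokernel.condition])
  obtain ⟨g, hg⟩ := hX h
  replace hg : σ ≫ g = h := hg
  have hqg : σ ≫ (q - g ≫ i) = 0 := by
    rw [Preadditive.comp_sub, ← Category.assoc, hg, hh, sub_self]
  have hip0 : i ≫ p = 0 := hom_ext hip.linearMap_comp_eq_zero
  refine ⟨cokernel.desc σ _ hqg, (cancel_epi (cokernel.π σ)).mp ?_⟩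
  rw [cokernel.π_desc_assoc, Preadditive.sub_comp, hqp, Category.assoc, hip0, comp_zero,
    sub_zero, Category.comp_id]

end Dclass

section univMap

variable (T M : ModuleCat.{u} A)

noncomputable def univMap : of A ((T ⟶ M) →₀ T) ⟶ M :=
  ofHom (Finsupp.lsum ℕ fun f : T ⟶ M => f.hom)

variable {T M}

lemma univMap_single (f : T ⟶ M) (t : T) : univMap T M (Finsupp.single f t) = f t :=
  Finsupp.lsum_single ℕ (fun f : T ⟶ M => f.hom) f t

lemma exists_comp_univMap_eq (f : T ⟶ M) : ∃ w, w ≫ univMap T M = f :=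
  ⟨ofHom (Finsupp.lsingle f), hom_ext <| LinearMap.ext <| univMap_single f⟩

lemma univMap_surjective (hM : M ∈ Gen T) : Surjective (univMap T M) := by
  obtain ⟨J, f, hf⟩ := hM
  let φ : of A (J →₀ T) ⟶ of A ((T ⟶ M) →₀ T) :=
    ofHom (Finsupp.lsum ℕ fun j => Finsupp.lsingle (ofHom (Finsupp.lsingle j) ≫ f))
  have hφ : φ ≫ univMap T M = f :=
    hom_ext <| Finsupp.lhom_ext fun j t => by
      simp only [φ, ModuleCat.hom_comp, hom_ofHom, LinearMap.comp_apply, Finsupp.lsum_single]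
      exact univMap_single _ t
  rw [← hφ] at hf
  exact Surjective.of_comp (g := ⇑φ) hf

end univMap

lemma finsupp_mem_Gen (T : ModuleCat.{u} A) (I : Type u) : of A (I →₀ T) ∈ Gen T :=
  ⟨I, 𝟙 _, surjective_id⟩

lemma Pres_subset_Gen (T : ModuleCat.{u} A) : Pres T ⊆ Gen T :=
  fun _ ⟨I, f, hf, _⟩ => ⟨I, f, hf⟩

theorem stmt_10_general {P Q : ModuleCat.{u} A} (hQ : Projective Q)
    (σ : P ⟶ Q) (hsilt : Gen (cokernel σ) = Dclass σ) :
    Pres (cokernel σ) = Gen (cokernel σ) ∧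
    ∀ X ∈ Gen (cokernel σ), Ext1Zero (cokernel σ) X := by
  refine ⟨(Pres_subset_Gen _).antisymm fun M hM => ?_, fun X hX => ?_⟩
  · have hker := ker_mem_Dclass σ (univMap _ M) (hsilt ▸ finsupp_mem_Gen _ _)
      exists_comp_univMap_eq
    exact ⟨_, univMap _ M, univMap_surjective hM, hsilt ▸ hker⟩
  · exact ext1Zero_of_mem_Dclass σ (hsilt ▸ hX)

/-- Every silting module is quasitilting: if `Gen (coker σ) = 𝒟_σ` then
`Pres (coker σ) = Gen (coker σ)` and `Ext¹(coker σ, X) = 0` for all `X ∈ Gen (coker σ)`. -/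
theorem stmt_10 {P Q : ModuleCat.{u} A} (hP : Projective P) (hQ : Projective Q)
    (σ : P ⟶ Q) (hsilt : Gen (cokernel σ) = Dclass σ) :
    Pres (cokernel σ) = Gen (cokernel σ) ∧
    ∀ X ∈ Gen (cokernel σ), Ext1Zero (cokernel σ) X :=
  stmt_10_general hQ σ hsilt
end

section
/- Let T be an A-module of projective dimension at most 1 which is silting with respect to a projective presentation σ: P₋₁ → P₀ and sincere (Hom_A(P,T) ≠ 0 for every nonzero projective module P). Then T is a tilting module, i.e. Gen(T) = {N : Ext^1_A(T,N) = 0}. -/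
universe u

open CategoryTheory CategoryTheory.Limits Function

variable {A : Type u} [Ring A]

/-!
Because `T ∈ Gen T = 𝒟_σ`, every map `ker σ → T` extends along `σ` (through a retraction
`P → ker σ`) and hence vanishes. Projective dimension `≤ 1` makes `ker π = im σ` projective, so
`ker σ` is a projective direct summand of `P`, and sincerity forces `σ` to be injective. Then
`0 → P → Q → T → 0` is exact, and `𝒟_σ = {N | Ext¹(T, N) = 0}`: an extension `0 → N → E → T → 0`
splits once the lift of `π` to `E` is corrected by an extension along `σ`, and conversely a map
`f : P → N` extends along `σ` through the retraction of the split pushout of `σ` along `f`.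
-/

section Pushout

variable {R P Q N T : Type*} [Ring R] [AddCommGroup P] [Module R P] [AddCommGroup Q] [Module R Q]
  [AddCommGroup N] [Module R N] [AddCommGroup T] [Module R T] (σ : P →ₗ[R] Q) (f : P →ₗ[R] N)

-- The pushout of `σ` and `f` is `(N × Q) ⧸ pushoutRel σ f`.
abbrev pushoutRel : Submodule R (N × Q) := LinearMap.range (f.prod (-σ))

def pushoutInl : N →ₗ[R] (N × Q) ⧸ pushoutRel σ f := (pushoutRel σ f).mkQ ∘ₗ LinearMap.inl R N Q

def pushoutInr : Q →ₗ[R] (N × Q) ⧸ pushoutRel σ f := (pushoutRel σ f).mkQ ∘ₗ LinearMap.inr R N Q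

theorem pushoutInr_comp : pushoutInr σ f ∘ₗ σ = pushoutInl σ f ∘ₗ f := by
  ext x
  simp only [pushoutInr, pushoutInl, LinearMap.comp_apply, Submodule.mkQ_apply,
    Submodule.Quotient.eq]
  exact ⟨-x, by simp⟩

theorem pushoutInl_injective (hσ : Function.Injective σ) :
    Function.Injective (pushoutInl σ f) := by
  rw [← LinearMap.ker_eq_bot, eq_bot_iff]
  rintro n hn
  obtain ⟨x, hx⟩ := (Submodule.Quotient.mk_eq_zero _).1 hn
  have hfx : f x = n := congrArg Prod.fst hx
  have hσx : σ x = 0 := neg_eq_zero.1 (congrArg Prod.snd hx)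
  rw [← hfx, hσ (hσx.trans σ.map_zero.symm), map_zero]
  exact Submodule.zero_mem _

variable {σ} {π : Q →ₗ[R] T}

def pushoutDesc (hσπ : Function.Exact σ π) : (N × Q) ⧸ pushoutRel σ f →ₗ[R] T :=
  (pushoutRel σ f).liftQ (π ∘ₗ LinearMap.snd R N Q) <| by
    rintro _ ⟨x, rfl⟩
    simp [hσπ.apply_apply_eq_zero]

theorem pushoutDesc_surjective (hσπ : Function.Exact σ π) (hπ : Function.Surjective π) :
    Function.Surjective (pushoutDesc f hσπ) := by
  intro t
  obtain ⟨q, rfl⟩ := hπ t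
  exact ⟨pushoutInr σ f q, rfl⟩

theorem exact_pushoutInl_pushoutDesc (hσπ : Function.Exact σ π) :
    Function.Exact (pushoutInl σ f) (pushoutDesc f hσπ) := by
  intro y
  obtain ⟨⟨n, q⟩, rfl⟩ := Submodule.mkQ_surjective _ y
  constructor
  · intro (hq : π q = 0)
    obtain ⟨x, rfl⟩ := (hσπ q).1 hq
    refine ⟨n + f x, (Submodule.Quotient.eq _).2 ⟨x, ?_⟩⟩
    ext <;> simp
  · rintro ⟨n', hn'⟩
    rw [← hn']
    simp [pushoutInl, pushoutDesc]

end Pushout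

abbrev shortComplexOfExact {X₁ X₂ X₃ : ModuleCat.{u} A} {f : X₁ ⟶ X₂} {g : X₂ ⟶ X₃}
    (h : Function.Exact f g) : ShortComplex (ModuleCat.{u} A) :=
  ShortComplex.mk f g (ModuleCat.hom_ext (LinearMap.ext h.apply_apply_eq_zero))

theorem ext1Zero_of_mem_Dclass_s12 {P Q T N : ModuleCat.{u} A} [Projective Q] {σ : P ⟶ Q}
    {π : Q ⟶ T} (hπ : Surjective π) (hσπ : Function.Exact σ π) (hN : N ∈ Dclass σ) :
    Ext1Zero T N := by
  intro E i p hi hp hip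
  have : Mono i := (ModuleCat.mono_iff_injective i).2 hi
  have : Epi π := (ModuleCat.epi_iff_surjective π).2 hπ
  have : Epi p := (ModuleCat.epi_iff_surjective p).2 hp
  have hS := ModuleCat.shortComplex_exact (shortComplexOfExact hσπ) hσπ
  have hS' := ModuleCat.shortComplex_exact (shortComplexOfExact hip) hip
  let φ := Projective.factorThru π p
  obtain ⟨h, hh : σ ≫ h = _⟩ :=
    hN (hS'.lift (σ ≫ φ) (by simpa [φ] using (shortComplexOfExact hσπ).zero))
  refine ⟨hS.desc (φ - h ≫ i) ?_, ?_⟩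
  · change σ ≫ (φ - h ≫ i) = 0
    rw [Preadditive.comp_sub, ← Category.assoc, hh, hS'.lift_f, sub_self]
  · rw [← cancel_epi π]
    simpa [φ, (shortComplexOfExact hip).zero] using hS.g_desc_assoc (φ - h ≫ i) _ p

theorem mem_Dclass_of_ext1Zero {P Q T N : ModuleCat.{u} A} {σ : P ⟶ Q} {π : Q ⟶ T}
    (hσ : Injective σ) (hπ : Surjective π) (hσπ : Function.Exact σ π) (hN : Ext1Zero T N) :
    N ∈ Dclass σ := by
  intro f
  have hinj := pushoutInl_injective σ.hom f.hom hσ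
  have hsurj := pushoutDesc_surjective f.hom hσπ hπ
  have hexact := exact_pushoutInl_pushoutDesc f.hom hσπ
  obtain ⟨s, hs⟩ := hN (ModuleCat.of A _) (ModuleCat.ofHom (pushoutInl σ.hom f.hom))
    (ModuleCat.ofHom (pushoutDesc f.hom hσπ)) hinj hsurj hexact
  have hsplit := (hexact.split_tfae hinj hsurj).out 0 1
  obtain ⟨r, hr⟩ := hsplit.1 ⟨s.hom, congrArg ModuleCat.Hom.hom hs⟩
  refine ⟨ModuleCat.ofHom (r ∘ₗ pushoutInr σ.hom f.hom), ModuleCat.hom_ext ?_⟩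
  change r ∘ₗ pushoutInr σ.hom f.hom ∘ₗ σ.hom = f.hom
  rw [pushoutInr_comp, ← LinearMap.comp_assoc, hr, LinearMap.id_comp]

theorem Dclass_eq_setOf_ext1Zero {P Q T : ModuleCat.{u} A} [Projective Q] {σ : P ⟶ Q}
    {π : Q ⟶ T} (hσ : Injective σ) (hπ : Surjective π) (hσπ : Function.Exact σ π) :
    Dclass σ = {N | Ext1Zero T N} :=
  Set.ext fun _ => ⟨ext1Zero_of_mem_Dclass_s12 hπ hσπ, mem_Dclass_of_ext1Zero hσ hπ hσπ⟩

theorem hasProjectiveDimensionLT_two_of_exact {P₁ P₀ T : ModuleCat.{u} A} [Projective P₁]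
    [Projective P₀] {ι : P₁ ⟶ P₀} {pr : P₀ ⟶ T} (hι : Injective ι) (hpr : Surjective pr)
    (h : Function.Exact ι pr) : HasProjectiveDimensionLT T 2 :=
  have hS := ModuleCat.shortComplex_shortExact (shortComplexOfExact h) h hι hpr
  (hS.hasProjectiveDimensionLT_X₃_iff 0 ‹_›).2 inferInstance

theorem projective_ker_of_hasProjectiveDimensionLT_two {M N : ModuleCat.{u} A} [Projective M]
    [HasProjectiveDimensionLT N 2] {g : M ⟶ N} (hg : Surjective g) :
    Projective (ModuleCat.of A (LinearMap.ker g.hom)) :=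
  projective_iff_hasProjectiveDimensionLT_one.2
    (((g.hom.shortExact_shortComplexKer hg).hasProjectiveDimensionLT_X₃_iff 0 ‹_›).1 ‹_›)

theorem eq_zero_of_mem_Dclass {K P Q X : ModuleCat.{u} A} {σ : P ⟶ Q} (hX : X ∈ Dclass σ)
    {i : K ⟶ P} (hi : i ≫ σ = 0) {r : P ⟶ K} (hr : i ≫ r = 𝟙 K) (f : K ⟶ X) : f = 0 := by
  obtain ⟨h, hh : σ ≫ h = r ≫ f⟩ := hX (r ≫ f)
  rw [← Category.id_comp f, ← hr, Category.assoc, ← hh, ← Category.assoc, hi, zero_comp]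

theorem injective_of_sincere {P Q T : ModuleCat.{u} A} [Projective P] {σ : P ⟶ Q} {π : Q ⟶ T}
    (hσπ : Function.Exact σ π) [Projective (ModuleCat.of A (LinearMap.ker π.hom))]
    (hT : T ∈ Dclass σ)
    (hsincere : ∀ P' : ModuleCat.{u} A, Projective P' → (∃ x : P', x ≠ 0) →
      ∃ f : P' ⟶ T, f ≠ 0) :
    Injective σ := by
  let σ' : P →ₗ[A] LinearMap.ker π.hom := σ.hom.codRestrict _ hσπ.apply_apply_eq_zero
  have hσ' : Surjective σ' := by
    rintro ⟨q, hq⟩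
    obtain ⟨x, rfl⟩ := (hσπ q).1 hq
    exact ⟨x, rfl⟩
  -- `0 → ker σ → P → ker π → 0` splits since `ker π` is projective.
  let split := (σ'.shortExact_shortComplexKer hσ').splittingOfProjective
  have : Projective (ModuleCat.of A (LinearMap.ker σ')) := Retract.projective ⟨_, _, split.f_r⟩
  rw [injective_iff_map_eq_zero]
  intro x hx
  by_contra hx0
  obtain ⟨f, hf⟩ := hsincere _ this ⟨⟨x, Subtype.ext hx⟩, fun h => hx0 (congrArg Subtype.val h)⟩
  have hi : ModuleCat.ofHom (LinearMap.ker σ').subtype ≫ σ = 0 := by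
    ext k
    exact congrArg Subtype.val k.2
  exact hf (eq_zero_of_mem_Dclass hT hi split.f_r f)

theorem self_mem_Gen (T : ModuleCat.{u} A) : T ∈ Gen T :=
  ⟨PUnit, ModuleCat.ofHom (Finsupp.lapply PUnit.unit),
    fun t => ⟨Finsupp.single PUnit.unit t, Finsupp.single_eq_same⟩⟩

/-- A sincere silting module of projective dimension at most 1 is tilting. -/
theorem stmt_12 (T : ModuleCat.{u} A)
    -- projective dimension at most 1
    (hpd : ∃ (P₁ P₀ : ModuleCat.{u} A) (_ : Projective P₁) (_ : Projective P₀)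
      (ι : P₁ ⟶ P₀) (pr : P₀ ⟶ T), Injective ι ∧ Surjective pr ∧ Function.Exact ⇑ι ⇑pr)
    -- silting with respect to a projective presentation σ
    {P Q : ModuleCat.{u} A} (hP : Projective P) (hQ : Projective Q)
    (σ : P ⟶ Q) (π : Q ⟶ T) (hπ : Surjective π) (hexact : Function.Exact ⇑σ ⇑π)
    (hsilt : Gen T = Dclass σ)
    -- sincere
    (hsincere : ∀ P' : ModuleCat.{u} A, Projective P' → (∃ x : P', x ≠ 0) →
      ∃ f : P' ⟶ T, f ≠ 0) :
    Gen T = {N | Ext1Zero T N} := by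
  obtain ⟨P₁, P₀, hP₁, hP₀, ι, pr, hι, hpr, hιpr⟩ := hpd
  have : HasProjectiveDimensionLT T 2 := hasProjectiveDimensionLT_two_of_exact hι hpr hιpr
  have : Projective (ModuleCat.of A (LinearMap.ker π.hom)) :=
    projective_ker_of_hasProjectiveDimensionLT_two hπ
  have hσ : Injective σ := injective_of_sincere hexact (hsilt ▸ self_mem_Gen T) hsincere
  rw [hsilt, Dclass_eq_setOf_ext1Zero hσ hπ hexact]
end

section
/- Let T be a quasitilting A-module (i.e. Pres(T) = Gen(T) and Ext^1_A(T, Gen(T)) = 0). Then Add(T) is exactly the class of Ext-projective modules in Gen(T): a module M ∈ Gen(T) satisfies Ext^1_A(M, X) = 0 for all X ∈ Gen(T) if and only if M is a direct summand of a direct sum of copies of T. -/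
/-!
An Ext-projective `M ∈ Gen T = Pres T` has a presentation `0 → K → T^(I) → M → 0` with
`K ∈ Gen T`; this sequence splits, so `M ∈ Add T`. Conversely, `Ext¹(T, X) = 0` means `T`
lifts along every epimorphism with kernel `X` (pull the extension back along the map to be
lifted); the lifting property passes to direct sums of copies of `T` and to their summands.
-/

universe u

open CategoryTheory CategoryTheory.Limits Function

variable {A : Type u} [Ring A]

namespace Ext1Zero

theorem exists_lift {P X E Y : ModuleCat.{u} A} (h : Ext1Zero P X) (i : X ⟶ E) (p : E ⟶ Y)
    (hi : Injective i) (hp : Surjective p) (hex : Function.Exact i p) (g : P ⟶ Y) :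
    ∃ σ : P ⟶ E, σ ≫ p = g := by
  let F : Submodule A (E × P) :=
    LinearMap.ker (p.hom ∘ₗ LinearMap.fst A E P - g.hom ∘ₗ LinearMap.snd A E P)
  have mem_F (v : E × P) : v ∈ F ↔ p v.1 = g v.2 := by simp [F, sub_eq_zero]
  let i' : X →ₗ[A] F := LinearMap.codRestrict F (LinearMap.inl A E P ∘ₗ i.hom)
    fun x => by simp [mem_F, hex.apply_apply_eq_zero]
  let p' : F →ₗ[A] P := LinearMap.snd A E P ∘ₗ F.subtype
  have hi' : Injective i' := fun a b hab => hi congr(($hab : E × P).1)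
  have hp' : Surjective p' := fun t =>
    let ⟨e, he⟩ := hp (g t)
    ⟨⟨(e, t), (mem_F _).2 he⟩, rfl⟩
  have hex' : Function.Exact i' p' := by
    rintro ⟨⟨e, t⟩, hv⟩
    constructor
    · rintro (rfl : t = 0)
      obtain ⟨x, rfl⟩ := (hex e).1 (by simpa using (mem_F _).1 hv)
      exact ⟨x, rfl⟩
    · rintro ⟨x, hx⟩
      exact congr(($hx.symm : E × P).2)
  obtain ⟨s, hs⟩ := h (.of A F) (ModuleCat.ofHom i') (ModuleCat.ofHom p') hi' hp' hex'
  refine ⟨s ≫ ModuleCat.ofHom (LinearMap.fst A E P ∘ₗ F.subtype), ?_⟩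
  ext t
  have hst : ((s t : F) : E × P).2 = t := congr($hs t)
  simpa [hst] using (mem_F _).1 (s t).2

theorem finsupp {T X : ModuleCat.{u} A} (h : Ext1Zero T X) (I : Type u) :
    Ext1Zero (ModuleCat.of A (I →₀ T)) X := by
  intro E i p hi hp hex
  choose σ hσ using fun j => h.exists_lift i p hi hp hex (ModuleCat.ofHom (Finsupp.lsingle j))
  refine ⟨ModuleCat.ofHom (Finsupp.lsum ℕ fun j => (σ j).hom), ?_⟩
  ext1
  refine Finsupp.lhom_ext fun j t => ?_
  simpa using congr($(hσ j) t)

theorem of_retract {M N X : ModuleCat.{u} A} (h : Ext1Zero N X) (s : M ⟶ N) (r : N ⟶ M)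
    (hsr : s ≫ r = 𝟙 M) : Ext1Zero M X := by
  intro E i p hi hp hex
  obtain ⟨σ, hσ⟩ := h.exists_lift i p hi hp hex r
  exact ⟨s ≫ σ, by rw [Category.assoc, hσ, hsr]⟩

end Ext1Zero

theorem mem_addCl_of_mem_pres {T M : ModuleCat.{u} A} (hM : M ∈ Pres T)
    (hproj : ∀ X ∈ Gen T, Ext1Zero M X) : M ∈ AddCl T := by
  obtain ⟨I, f, hf, hker⟩ := hM
  obtain ⟨s, hs⟩ := hproj _ hker _ (ModuleCat.ofHom (LinearMap.ker f.hom).subtype) f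
    Subtype.val_injective hf (LinearMap.exact_subtype_ker_map f.hom)
  exact ⟨I, s, f, hs⟩

/-- For a quasitilting module `T`, `Add T` is exactly the class of Ext-projective
modules in `Gen T`. -/
theorem stmt_13 (T : ModuleCat.{u} A) (hpres : Pres T = Gen T)
    (hExt : ∀ X ∈ Gen T, Ext1Zero T X) :
    ∀ M ∈ Gen T, ((∀ X ∈ Gen T, Ext1Zero M X) ↔ M ∈ AddCl T) := by
  intro M hM
  refine ⟨mem_addCl_of_mem_pres (hpres ▸ hM), ?_⟩
  rintro ⟨I, s, r, hsr⟩ X hX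
  exact ((hExt X hX).finsupp I).of_retract s r hsr
end

section
/- Let 𝒯 be a torsion class in Mod(A) such that every A-module M admits an exact sequence M →^φ B → C → 0 where φ is a left 𝒯-approximation (B ∈ 𝒯 and every map M → X with X ∈ 𝒯 factors through φ) and C is Ext-projective in 𝒯. Then there exists a module T with 𝒯 = Gen(T); specifically, for an approximation sequence A →^φ B → C → 0 of the regular module, T = B ⊕ C satisfies Gen(T) = 𝒯. -/
universe u

open CategoryTheory CategoryTheory.Limits Function

variable {A : Type u} [Ring A]

/-! For `X ∈ 𝒯` every map `A → X`, `a ↦ a • x`, factors through the approximation `A → B`, so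
every element of `X` lies in the image of a map `B → X`; hence `𝒯 ⊆ Gen B ⊆ Gen (B ⊕ C)`.
Conversely `B ⊕ C ∈ 𝒯` is an extension of `C` by `B`, and a torsion class containing `T`
contains `Gen T`. -/

theorem prod_mem_of_extension_closed {𝒯 : Set (ModuleCat.{u} A)}
    (hext : ∀ (X Y Z : ModuleCat.{u} A) (i : X ⟶ Y) (p : Y ⟶ Z), Injective i → Surjective p →
      Function.Exact ⇑i ⇑p → X ∈ 𝒯 → Z ∈ 𝒯 → Y ∈ 𝒯)
    {B C : ModuleCat.{u} A} (hB : B ∈ 𝒯) (hC : C ∈ 𝒯) :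
    ModuleCat.of A (↑B × ↑C) ∈ 𝒯 :=
  hext B _ C (ModuleCat.ofHom (LinearMap.inl A B C)) (ModuleCat.ofHom (LinearMap.snd A B C))
    LinearMap.inl_injective Prod.snd_surjective Function.Exact.inl_snd hB hC

theorem gen_subset_of_mem {𝒯 : Set (ModuleCat.{u} A)}
    (hepi : ∀ X ∈ 𝒯, ∀ (Y : ModuleCat.{u} A) (p : X ⟶ Y), Surjective p → Y ∈ 𝒯)
    (hsum : ∀ (I : Type u) (X : I → ModuleCat.{u} A), (∀ i, X i ∈ 𝒯) →
      ModuleCat.of A (DirectSum I (fun i => (X i : Type u))) ∈ 𝒯)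
    {T : ModuleCat.{u} A} (hT : T ∈ 𝒯) : Gen T ⊆ 𝒯 := by
  classical
  rintro X ⟨I, f, hf⟩
  have hfinsupp : ModuleCat.of A (I →₀ T) ∈ 𝒯 :=
    hepi _ (hsum I (fun _ => T) fun _ => hT) _
      (ModuleCat.ofHom (finsuppLEquivDirectSum A T I).symm.toLinearMap)
      (finsuppLEquivDirectSum A T I).symm.surjective
  exact hepi _ hfinsupp X f hf

theorem mem_gen_of_forall_mem_range {T X : ModuleCat.{u} A}
    (h : ∀ x : X, ∃ g : T ⟶ X, x ∈ Set.range g) : X ∈ Gen T := by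
  choose g y hy using h
  refine ⟨X, ModuleCat.ofHom (Finsupp.lsum ℕ fun x => (g x).hom), fun x => ⟨Finsupp.single x (y x), ?_⟩⟩
  simpa [Finsupp.lsum_single] using hy x

theorem mem_gen_of_forall_factors {B X : ModuleCat.{u} A} (φ : ModuleCat.of A A ⟶ B)
    (h : ∀ f : ModuleCat.of A A ⟶ X, ∃ g : B ⟶ X, φ ≫ g = f) : X ∈ Gen B := by
  refine mem_gen_of_forall_mem_range fun x => ?_
  obtain ⟨g, hg⟩ := h (ModuleCat.ofHom (LinearMap.toSpanSingleton A X x))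
  refine ⟨g, φ 1, ?_⟩
  simpa using congr($hg (1 : A))

theorem gen_subset_gen_of_surjective {T T' : ModuleCat.{u} A} (p : T' ⟶ T) (hp : Surjective p) :
    Gen T ⊆ Gen T' := by
  rintro X ⟨I, f, hf⟩
  refine ⟨I, ModuleCat.ofHom (Finsupp.mapRange.linearMap p.hom) ≫ f, hf.comp ?_⟩
  exact Finsupp.mapRange_surjective _ (map_zero p.hom) hp

theorem stmt_14_general (𝒯 : Set (ModuleCat.{u} A))
    -- 𝒯 is a torsion class
    (hepi : ∀ X ∈ 𝒯, ∀ (Y : ModuleCat.{u} A) (p : X ⟶ Y), Surjective p → Y ∈ 𝒯)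
    (hext : ∀ (X Y Z : ModuleCat.{u} A) (i : X ⟶ Y) (p : Y ⟶ Z), Injective i → Surjective p →
      Function.Exact ⇑i ⇑p → X ∈ 𝒯 → Z ∈ 𝒯 → Y ∈ 𝒯)
    (hsum : ∀ (I : Type u) (X : I → ModuleCat.{u} A), (∀ i, X i ∈ 𝒯) →
      ModuleCat.of A (DirectSum I (fun i => (X i : Type u))) ∈ 𝒯)
    -- a chosen approximation sequence of the regular module A
    (B C : ModuleCat.{u} A) (φ : ModuleCat.of A A ⟶ B)
    (hB : B ∈ 𝒯) (happ : ∀ X ∈ 𝒯, ∀ f : ModuleCat.of A A ⟶ X, ∃ g : B ⟶ X, φ ≫ g = f)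
    (hC : C ∈ 𝒯) :
    Gen (ModuleCat.of A (↑B × ↑C)) = 𝒯 := by
  refine subset_antisymm (gen_subset_of_mem hepi hsum (prod_mem_of_extension_closed hext hB hC))
    fun X hX => ?_
  exact gen_subset_gen_of_surjective (ModuleCat.ofHom (LinearMap.fst A B C)) Prod.fst_surjective
    (mem_gen_of_forall_factors φ (happ X hX))

/-- If a torsion class `𝒯` provides, for each module, a left `𝒯`-approximation with
Ext-projective cokernel, then for an approximation sequence `A → B → C → 0` of the
regular module, the module `T = B ⊕ C` satisfies `Gen T = 𝒯`. -/
theorem stmt_14 (𝒯 : Set (ModuleCat.{u} A))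
    -- 𝒯 is a torsion class
    (hepi : ∀ X ∈ 𝒯, ∀ (Y : ModuleCat.{u} A) (p : X ⟶ Y), Surjective p → Y ∈ 𝒯)
    (hext : ∀ (X Y Z : ModuleCat.{u} A) (i : X ⟶ Y) (p : Y ⟶ Z), Injective i → Surjective p →
      Function.Exact ⇑i ⇑p → X ∈ 𝒯 → Z ∈ 𝒯 → Y ∈ 𝒯)
    (hsum : ∀ (I : Type u) (X : I → ModuleCat.{u} A), (∀ i, X i ∈ 𝒯) →
      ModuleCat.of A (DirectSum I (fun i => (X i : Type u))) ∈ 𝒯)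
    -- every module has a left 𝒯-approximation with Ext-projective cokernel
    (happrox : ∀ M : ModuleCat.{u} A, ∃ (B C : ModuleCat.{u} A) (φ : M ⟶ B) (ψ : B ⟶ C),
      B ∈ 𝒯 ∧ (∀ X ∈ 𝒯, ∀ f : M ⟶ X, ∃ g : B ⟶ X, φ ≫ g = f) ∧
      Surjective ψ ∧ Function.Exact ⇑φ ⇑ψ ∧ C ∈ 𝒯 ∧ (∀ X ∈ 𝒯, Ext1Zero C X))
    -- a chosen approximation sequence of the regular module A
    (B C : ModuleCat.{u} A) (φ : ModuleCat.of A A ⟶ B) (ψ : B ⟶ C)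
    (hB : B ∈ 𝒯) (happ : ∀ X ∈ 𝒯, ∀ f : ModuleCat.of A A ⟶ X, ∃ g : B ⟶ X, φ ≫ g = f)
    (hψ : Surjective ψ) (hex : Function.Exact ⇑φ ⇑ψ) (hC : C ∈ 𝒯)
    (hCext : ∀ X ∈ 𝒯, Ext1Zero C X) :
    Gen (ModuleCat.of A (↑B × ↑C)) = 𝒯 :=
  stmt_14_general 𝒯 hepi hext hsum B C φ hB happ hC
end

section
/- Let T be a partial silting A-module with respect to a projective presentation σ: P₋₁ → P₀. Let ψ: P₋₁^(I) → A be the universal map with I = Hom_A(P₋₁, A), and form the pushout of σ^(I): P₋₁^(I) → P₀^(I) along ψ, yielding an exact sequence A →^φ M → T^(I) → 0. Then M belongs to 𝒟_σ and φ is a left 𝒟_σ-approximation of A. -/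
universe u

open CategoryTheory CategoryTheory.Limits Function

variable {A : Type u} [Ring A]

/-- The universal map `ψ : P₋₁^(I) → A`, where `I = Hom_A(P₋₁, A)`. -/
noncomputable def universalToA (P : ModuleCat.{u} A) :
    ModuleCat.of A ((P ⟶ ModuleCat.of A A) →₀ P) ⟶ ModuleCat.of A A :=
  ModuleCat.ofHom (Finsupp.lsum ℕ (fun f : (P ⟶ ModuleCat.of A A) => (f.hom : ↑P →ₗ[A] A)))

/-- The direct sum `σ^(I) : P₋₁^(I) → P₀^(I)` of copies of `σ`. -/
noncomputable def sigmaPow {P Q : ModuleCat.{u} A} (σ : P ⟶ Q) (I : Type u) :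
    ModuleCat.of A (I →₀ P) ⟶ ModuleCat.of A (I →₀ Q) :=
  ModuleCat.ofHom (Finsupp.mapRange.linearMap (σ.hom : ↑P →ₗ[A] ↑Q))

/-!
The pushout `M` sits in an exact sequence `A → M → T^(I) → 0`, with `T^(I)` realised as
`P₀^(I) ⧸ range σ^(I)`; it lies in `𝒟_σ` as an epimorphic image of a direct sum of copies of `T`.
Given `f : P₋₁ → M`, extend `f ≫ π` along `σ` and lift the result through `π` (`P₀` is
projective); what is left of `f` maps into the image of `A`, so by projectivity of `P₋₁` it is
`h ≫ φ` for some `h ∈ I`, and the `h`-th coordinate `P₀ → P₀^(I) → M` extends it along `σ`.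
The approximation property is the universal property of the pushout: every `X ∈ 𝒟_σ` extends
each `i ≫ f` along `σ`, hence `ψ ≫ f` along `σ^(I)`.
-/

namespace ModuleCat

variable {X Y Z : ModuleCat.{u} A} (f : X ⟶ Y) (g : X ⟶ Z)

theorem exists_inl_add_inr_eq (m : ↑(pushout f g)) :
    ∃ y z, pushout.inl f g y + pushout.inr f g z = m := by
  set S := LinearMap.range (pushout.inl f g).hom ⊔ LinearMap.range (pushout.inr f g).hom
  -- the projection onto `pushout f g ⧸ S` vanishes on both legs, hence is zero
  have hS : ofHom S.mkQ = 0 := by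
    apply pushout.hom_ext <;> ext x : 2
    · exact (Submodule.Quotient.mk_eq_zero S).2 (Submodule.mem_sup_left ⟨x, rfl⟩)
    · exact (Submodule.Quotient.mk_eq_zero S).2 (Submodule.mem_sup_right ⟨x, rfl⟩)
  have hm : m ∈ S := (Submodule.Quotient.mk_eq_zero S).1 (ConcreteCategory.congr_hom hS m)
  obtain ⟨_, ⟨y, rfl⟩, _, ⟨z, rfl⟩, hyz⟩ := Submodule.mem_sup.1 hm
  exact ⟨y, z, hyz⟩

noncomputable def pushoutToQuotientRange :
    pushout f g ⟶ of A (Z ⧸ LinearMap.range g.hom) :=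
  pushout.desc 0 (ofHom (LinearMap.range g.hom).mkQ) <| by
    ext x : 2
    exact ((Submodule.Quotient.mk_eq_zero _).2 (LinearMap.mem_range_self g.hom x)).symm

@[simp]
theorem pushoutToQuotientRange_inl (y : Y) :
    pushoutToQuotientRange f g (pushout.inl f g y) = 0 :=
  ConcreteCategory.congr_hom (pushout.inl_desc _ _ _) y

@[simp]
theorem pushoutToQuotientRange_inr (z : Z) :
    pushoutToQuotientRange f g (pushout.inr f g z) = Submodule.Quotient.mk z :=
  ConcreteCategory.congr_hom (pushout.inr_desc _ _ _) z

theorem pushoutToQuotientRange_surjective : Surjective (pushoutToQuotientRange f g) := by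
  rintro ⟨z⟩
  exact ⟨pushout.inr f g z, pushoutToQuotientRange_inr f g z⟩

theorem ker_pushoutToQuotientRange :
    LinearMap.ker (pushoutToQuotientRange f g).hom = LinearMap.range (pushout.inl f g).hom := by
  apply le_antisymm
  · intro m hm
    obtain ⟨y, z, rfl⟩ := exists_inl_add_inr_eq f g m
    have hz : Submodule.Quotient.mk z = (0 : Z ⧸ LinearMap.range g.hom) := by
      change pushoutToQuotientRange f g (_ + _) = 0 at hm
      rwa [map_add, pushoutToQuotientRange_inl, pushoutToQuotientRange_inr, zero_add] at hm
    obtain ⟨x, rfl⟩ := (Submodule.Quotient.mk_eq_zero _).1 hz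
    have hx : pushout.inr f g (g x) = pushout.inl f g (f x) :=
      (ConcreteCategory.congr_hom pushout.condition x).symm
    exact ⟨y + f x, by rw [map_add, hx]⟩
  · rintro _ ⟨y, rfl⟩
    exact pushoutToQuotientRange_inl f g y

theorem exists_comp_eq_of_projective_of_range_le {P : ModuleCat.{u} A} (hP : Projective P)
    (φ : Y ⟶ Z) (h : P ⟶ Z) (hh : LinearMap.range h.hom ≤ LinearMap.range φ.hom) :
    ∃ k : P ⟶ Y, k ≫ φ = h := by
  have : Module.Projective A P := (IsProjective.iff_projective P).2 hP
  obtain ⟨k, hk⟩ := Module.projective_lifting_property φ.hom.rangeRestrict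
    (h.hom.codRestrict _ fun p => hh ⟨p, rfl⟩) φ.hom.surjective_rangeRestrict
  exact ⟨ofHom k, by ext p; exact congrArg Subtype.val (LinearMap.congr_fun hk p)⟩

end ModuleCat

open ModuleCat

section Dclass

variable {P Q : ModuleCat.{u} A} (σ : P ⟶ Q)

theorem ofHom_lsingle_comp_ofHom_lsum {I : Type u} {X : ModuleCat.{u} A} (k : I → (P ⟶ X))
    (i : I) : ofHom (Finsupp.lsingle i) ≫ ofHom (Finsupp.lsum ℕ fun i => (k i).hom) = k i := by
  ext p : 2
  exact Finsupp.lsum_single ℕ (fun i => (k i).hom) i p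

theorem comp_lsingle_eq_lsingle_comp_sigmaPow {I : Type u} (i : I) :
    σ ≫ ofHom (Finsupp.lsingle i) = ofHom (Finsupp.lsingle i) ≫ sigmaPow σ I := by
  ext p : 2
  exact (Finsupp.mapRange_single (hf := map_zero σ.hom)).symm

theorem exists_sigmaPow_comp_eq {I : Type u} {X : ModuleCat.{u} A} (hX : X ∈ Dclass σ)
    (g : ModuleCat.of A (I →₀ P) ⟶ X) : ∃ k, sigmaPow σ I ≫ k = g := by
  choose k hk using fun i : I => hX (ofHom (Finsupp.lsingle i) ≫ g)
  refine ⟨ofHom (Finsupp.lsum ℕ fun i => (k i).hom), ?_⟩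
  refine ModuleCat.hom_ext (Finsupp.lhom_ext' fun i => congrArg Hom.hom ?_)
  change ofHom (Finsupp.lsingle i) ≫ _ ≫ _ = ofHom (Finsupp.lsingle i) ≫ g
  rw [← Category.assoc, ← comp_lsingle_eq_lsingle_comp_sigmaPow, Category.assoc,
    ofHom_lsingle_comp_ofHom_lsum]
  exact hk i

theorem mem_Dclass_of_surjective (hQ : Projective Q) {M C : ModuleCat.{u} A} (π : M ⟶ C)
    (hπ : Surjective π) (hC : C ∈ Dclass σ)
    (hker : ∀ f : P ⟶ M, f ≫ π = 0 → ∃ g, σ ≫ g = f) : M ∈ Dclass σ := by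
  intro f
  have : Epi π := (ModuleCat.epi_iff_surjective π).2 hπ
  obtain ⟨g₁, hg₁⟩ := hC (f ≫ π)
  obtain ⟨g, hg⟩ := hker (f - σ ≫ Projective.factorThru g₁ π) (by
    simp only [Preadditive.sub_comp, Category.assoc, Projective.factorThru_comp]
    exact sub_eq_zero.2 hg₁.symm)
  exact ⟨Projective.factorThru g₁ π + g, by simp [hg]⟩

theorem quotient_range_sigmaPow_mem_Dclass
    (hepi : ∀ X ∈ Dclass σ, ∀ (Y : ModuleCat.{u} A) (p : X ⟶ Y), Surjective p → Y ∈ Dclass σ)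
    (hsum : ∀ (I : Type u) (X : I → ModuleCat.{u} A), (∀ i, X i ∈ Dclass σ) →
      ModuleCat.of A (DirectSum I (fun i => (X i : Type u))) ∈ Dclass σ)
    (hT : cokernel σ ∈ Dclass σ) (I : Type u) :
    ModuleCat.of A ((I →₀ Q) ⧸ LinearMap.range (sigmaPow σ I).hom) ∈ Dclass σ := by
  classical
  set R := LinearMap.range (sigmaPow σ I).hom
  have hκ (i : I) : σ ≫ ofHom (R.mkQ ∘ₗ Finsupp.lsingle i) = 0 := by
    ext p : 2
    exact (Submodule.Quotient.mk_eq_zero R).2 ⟨Finsupp.single i p,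
      (ConcreteCategory.congr_hom (comp_lsingle_eq_lsingle_comp_sigmaPow σ i) p).symm⟩
  let t : ModuleCat.of A (DirectSum I fun _ => ((cokernel σ : ModuleCat.{u} A) : Type u)) ⟶
      ModuleCat.of A (_ ⧸ R) :=
    ofHom (DirectSum.toModule A I _ fun i => (cokernel.desc σ _ (hκ i)).hom)
  have ht : t.hom ∘ₗ
      (finsuppLEquivDirectSum A ((cokernel σ : ModuleCat.{u} A) : Type u) I).toLinearMap ∘ₗ
      Finsupp.mapRange.linearMap (cokernel.π σ).hom = R.mkQ := by
    refine Finsupp.lhom_ext fun i q => ?_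
    simp [t, finsuppLEquivDirectSum_single]
  refine hepi _ (hsum I _ fun _ => hT) _ t fun c => ?_
  obtain ⟨w, rfl⟩ := R.mkQ_surjective c
  exact ⟨finsuppLEquivDirectSum A _ I (Finsupp.mapRange (cokernel.π σ) (map_zero _) w),
    LinearMap.congr_fun ht w⟩

end Dclass

theorem exists_comp_eq_of_comp_pushoutToQuotientRange_eq_zero {P Q : ModuleCat.{u} A}
    (hP : Projective P) (σ : P ⟶ Q)
    (f : P ⟶ pushout (universalToA P) (sigmaPow σ (P ⟶ ModuleCat.of A A)))
    (hf : f ≫ pushoutToQuotientRange _ _ = 0) : ∃ g, σ ≫ g = f := by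
  have hrange : LinearMap.range f.hom ≤
      LinearMap.range (pushout.inl (universalToA P) (sigmaPow σ _)).hom := by
    rw [← ker_pushoutToQuotientRange]
    rintro _ ⟨p, rfl⟩
    exact ConcreteCategory.congr_hom hf p
  obtain ⟨h, rfl⟩ := exists_comp_eq_of_projective_of_range_le hP _ f hrange
  refine ⟨ofHom (Finsupp.lsingle h) ≫ pushout.inr _ _, ?_⟩
  rw [← Category.assoc, comp_lsingle_eq_lsingle_comp_sigmaPow, Category.assoc,
    ← pushout.condition, ← Category.assoc]
  exact congrArg (· ≫ _) (ofHom_lsingle_comp_ofHom_lsum (fun h => h) h)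

theorem stmt_15_general {P Q : ModuleCat.{u} A} (hP : Projective P) (hQ : Projective Q)
    (σ : P ⟶ Q)
    (hepi : ∀ X ∈ Dclass σ, ∀ (Y : ModuleCat.{u} A) (p : X ⟶ Y), Surjective p → Y ∈ Dclass σ)
    (hsum : ∀ (I : Type u) (X : I → ModuleCat.{u} A), (∀ i, X i ∈ Dclass σ) →
      ModuleCat.of A (DirectSum I (fun i => (X i : Type u))) ∈ Dclass σ)
    (hT : cokernel σ ∈ Dclass σ) :
    pushout (universalToA P) (sigmaPow σ (P ⟶ ModuleCat.of A A)) ∈ Dclass σ ∧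
    (∀ X ∈ Dclass σ, ∀ f : ModuleCat.of A A ⟶ X,
      ∃ g : pushout (universalToA P) (sigmaPow σ (P ⟶ ModuleCat.of A A)) ⟶ X,
        pushout.inl (universalToA P) (sigmaPow σ (P ⟶ ModuleCat.of A A)) ≫ g = f) := by
  refine ⟨mem_Dclass_of_surjective σ hQ _ (pushoutToQuotientRange_surjective _ _)
    (quotient_range_sigmaPow_mem_Dclass σ hepi hsum hT _)
    (exists_comp_eq_of_comp_pushoutToQuotientRange_eq_zero hP σ), fun X hX f => ?_⟩
  obtain ⟨k, hk⟩ := exists_sigmaPow_comp_eq σ hX (universalToA P ≫ f)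
  exact ⟨pushout.desc f k hk.symm, pushout.inl_desc _ _ _⟩

/-- Bongartz-type construction: if `T = coker σ` is partial silting with respect to `σ`,
then the pushout `M` of `σ^(I)` along the universal map `ψ : P₋₁^(I) → A` lies in `𝒟_σ`
and `φ = pushout.inl : A → M` is a left `𝒟_σ`-approximation of `A`. -/
theorem stmt_15 {P Q : ModuleCat.{u} A} (hP : Projective P) (hQ : Projective Q)
    (σ : P ⟶ Q)
    (hepi : ∀ X ∈ Dclass σ, ∀ (Y : ModuleCat.{u} A) (p : X ⟶ Y), Surjective p → Y ∈ Dclass σ)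
    (hext : ∀ (X Y Z : ModuleCat.{u} A) (i : X ⟶ Y) (p : Y ⟶ Z), Injective i → Surjective p →
      Function.Exact ⇑i ⇑p → X ∈ Dclass σ → Z ∈ Dclass σ → Y ∈ Dclass σ)
    (hsum : ∀ (I : Type u) (X : I → ModuleCat.{u} A), (∀ i, X i ∈ Dclass σ) →
      ModuleCat.of A (DirectSum I (fun i => (X i : Type u))) ∈ Dclass σ)
    (hT : cokernel σ ∈ Dclass σ) :
    pushout (universalToA P) (sigmaPow σ (P ⟶ ModuleCat.of A A)) ∈ Dclass σ ∧
    (∀ X ∈ Dclass σ, ∀ f : ModuleCat.of A A ⟶ X,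
      ∃ g : pushout (universalToA P) (sigmaPow σ (P ⟶ ModuleCat.of A A)) ⟶ X,
        pushout.inl (universalToA P) (sigmaPow σ (P ⟶ ModuleCat.of A A)) ≫ g = f) :=
  stmt_15_general hP hQ σ hepi hsum hT
end

section
/- Every partial silting A-module T with respect to a projective presentation σ is a direct summand of a silting A-module T̄ = T ⊕ M whose associated torsion class is 𝒟_σ, i.e. Gen(T ⊕ M) = 𝒟_σ and T ⊕ M is silting with respect to a suitable projective presentation γ with 𝒟_γ = 𝒟_σ. -/
universe u

open CategoryTheory CategoryTheory.Limits Function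

variable {A : Type u} [Ring A]

/-!
The complement `M` is the pushout of `σ^(I)` along the universal map `P^(I) → A`,
`I = Hom_A(P, A)`, i.e. the cokernel of `γ' = (u, -σ^(I)) : P^(I) → A ⊕ Q^(I)`, and `γ = σ ⊕ γ'`
presents `T ⊕ M`. Every `X ∈ 𝒟_σ` lies in `𝒟_γ'` (extend along `σ` index by index), so
`𝒟_γ = 𝒟_σ`; and the pushout property extends every map `A → X` over `M`, so `X` is generated
by `M`. Conversely `M ∈ 𝒟_σ`: a map `P → M` lifts to `A ⊕ Q^(I)` since `P` is projective. Its
`A`-component `a : P → A` is itself an index in `I`, so in the pushout it factors through `σ`.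
Its `Q^(I)`-component agrees with a map factoring through `σ` up to an element of the image of
`σ^(I)`, because `T^(I) ∈ 𝒟_σ` and `Q` is projective; and the image of `σ^(I)` becomes, in `M`,
the image of `A` again. Since `𝒟_σ` is closed under direct sums and quotients,
`Gen(T ⊕ M) = 𝒟_σ`.
-/

instance Module.Projective.finsupp {R M ι : Type*} [Ring R] [AddCommGroup M] [Module R M]
    [Module.Projective R M] : Module.Projective R (ι →₀ M) := by
  classical exact .of_equiv (finsuppLEquivDirectSum R M ι).symm

theorem Module.Projective.exists_comp_eq_of_range_le {R P M N : Type*} [Ring R]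
    [AddCommGroup P] [Module R P] [Module.Projective R P] [AddCommGroup M] [Module R M]
    [AddCommGroup N] [Module R N] (f : M →ₗ[R] N) (g : P →ₗ[R] N)
    (h : LinearMap.range g ≤ LinearMap.range f) : ∃ l : P →ₗ[R] M, f ∘ₗ l = g := by
  obtain ⟨l, hl⟩ := Module.projective_lifting_property f.rangeRestrict
    (g.codRestrict _ fun p => h ⟨p, rfl⟩) f.surjective_rangeRestrict
  exact ⟨l, LinearMap.ext fun p => congrArg Subtype.val (LinearMap.congr_fun hl p)⟩

theorem Function.Exact.prodMap {M N P M' N' P' : Type*} [Zero P] [Zero P'] {f : M → N}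
    {g : N → P} {f' : M' → N'} {g' : N' → P'} (h : Exact f g) (h' : Exact f' g') :
    Exact (Prod.map f f') (Prod.map g g') := by
  rintro ⟨y, y'⟩
  simp [Set.range_prodMap, h y, h' y']

theorem Function.Exact.finsuppMapRange {ι M N P : Type*} [Zero M] [Zero N] [Zero P]
    {f : M → N} {g : N → P} (hf : f 0 = 0) (hg : g 0 = 0) (h : Exact f g) :
    Exact (Finsupp.mapRange (α := ι) f hf) (Finsupp.mapRange g hg) := by
  intro w
  simp [Finsupp.range_mapRange, Finsupp.ext_iff, h _]

theorem ModuleCat.exact_cokernel_π {R : Type*} [Ring R] {P Q : ModuleCat.{u} R} (σ : P ⟶ Q) :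
    Exact σ (cokernel.π σ) :=
  (ShortComplex.ShortExact.moduleCat_exact_iff_function_exact _).mp
    (ShortComplex.cokernelSequence_exact σ)

def ClosedUnderQuotients (𝒞 : Set (ModuleCat.{u} A)) : Prop :=
  ∀ X ∈ 𝒞, ∀ (Y : ModuleCat.{u} A) (p : X ⟶ Y), Surjective p → Y ∈ 𝒞

def ClosedUnderDirectSums (𝒞 : Set (ModuleCat.{u} A)) : Prop :=
  ∀ (I : Type u) (X : I → ModuleCat.{u} A), (∀ i, X i ∈ 𝒞) →
    ModuleCat.of A (DirectSum I (fun i => (X i : Type u))) ∈ 𝒞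

section Gen

variable {𝒞 : Set (ModuleCat.{u} A)} {T : ModuleCat.{u} A}

theorem finsupp_mem_of_mem (hq : ClosedUnderQuotients 𝒞) (hs : ClosedUnderDirectSums 𝒞)
    (hT : T ∈ 𝒞) (J : Type u) : ModuleCat.of A (J →₀ T) ∈ 𝒞 := by
  classical
  exact hq _ (hs J (fun _ => T) fun _ => hT) _
    (ModuleCat.ofHom (finsuppLEquivDirectSum A T J).symm.toLinearMap)
    (finsuppLEquivDirectSum A T J).symm.surjective

theorem Gen_subset_of_mem (hq : ClosedUnderQuotients 𝒞) (hs : ClosedUnderDirectSums 𝒞)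
    (hT : T ∈ 𝒞) : Gen T ⊆ 𝒞 :=
  fun _ ⟨J, f, hf⟩ => hq _ (finsupp_mem_of_mem hq hs hT J) _ f hf

theorem Gen_subset_Gen_of_surjective {T' : ModuleCat.{u} A} (p : T ⟶ T') (hp : Surjective p) :
    Gen T' ⊆ Gen T := by
  rintro X ⟨J, f, hf⟩
  refine ⟨J, ModuleCat.ofHom (Finsupp.mapRange.linearMap p.hom) ≫ f, hf.comp ?_⟩
  exact Finsupp.mapRange_surjective _ (map_zero _) hp

theorem mem_Gen_of_forall_mem_range {X : ModuleCat.{u} A}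
    (h : ∀ x : X, ∃ φ : T →ₗ[A] X, x ∈ LinearMap.range φ) : X ∈ Gen T := by
  choose φ hφ using h
  refine ⟨X, ModuleCat.ofHom (Finsupp.lsum ℕ φ), fun x => ?_⟩
  obtain ⟨y, hy⟩ := hφ x
  exact ⟨Finsupp.single x y, by simp [hy]⟩

end Gen

section Dclass

variable {P Q X : ModuleCat.{u} A} {σ : P ⟶ Q}

theorem mem_Dclass_iff : X ∈ Dclass σ ↔ ∀ f : P →ₗ[A] X, ∃ g : Q →ₗ[A] X, g ∘ₗ σ.hom = f := by
  refine ⟨fun hX f => ?_, fun h f => ?_⟩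
  · obtain ⟨g, hg⟩ := hX (ModuleCat.ofHom f)
    exact ⟨g.hom, congrArg ModuleCat.Hom.hom hg⟩
  · obtain ⟨g, hg⟩ := h f.hom
    exact ⟨ModuleCat.ofHom g, ModuleCat.hom_ext hg⟩

theorem prod_mem_Dclass {Y : ModuleCat.{u} A} (hX : X ∈ Dclass σ) (hY : Y ∈ Dclass σ) :
    ModuleCat.of A (X × Y) ∈ Dclass σ := by
  rw [mem_Dclass_iff] at *
  intro f
  obtain ⟨g₁, hg₁⟩ := hX (LinearMap.fst A X Y ∘ₗ f)
  obtain ⟨g₂, hg₂⟩ := hY (LinearMap.snd A X Y ∘ₗ f)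
  refine ⟨g₁.prod g₂, ?_⟩
  rw [LinearMap.prod_comp, hg₁, hg₂, ← LinearMap.prod_comp, LinearMap.pair_fst_snd,
    LinearMap.id_comp]

theorem Dclass_ofHom_prodMap {P' Q' : ModuleCat.{u} A} (σ : P ⟶ Q) (τ : P' ⟶ Q') :
    Dclass (ModuleCat.ofHom (σ.hom.prodMap τ.hom)) = Dclass σ ∩ Dclass τ := by
  ext X
  simp only [Set.mem_inter_iff, mem_Dclass_iff, ModuleCat.hom_ofHom]
  refine ⟨fun h => ⟨fun f => ?_, fun f => ?_⟩, fun ⟨h₁, h₂⟩ f => ?_⟩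
  · obtain ⟨g, hg⟩ := h (f ∘ₗ LinearMap.fst A P P')
    refine ⟨g ∘ₗ LinearMap.inl A Q Q', LinearMap.ext fun p => ?_⟩
    simpa using LinearMap.congr_fun hg (p, 0)
  · obtain ⟨g, hg⟩ := h (f ∘ₗ LinearMap.snd A P P')
    refine ⟨g ∘ₗ LinearMap.inr A Q Q', LinearMap.ext fun p => ?_⟩
    simpa using LinearMap.congr_fun hg (0, p)
  · obtain ⟨g₁, hg₁⟩ := h₁ (f ∘ₗ LinearMap.inl A P P')
    obtain ⟨g₂, hg₂⟩ := h₂ (f ∘ₗ LinearMap.inr A P P')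
    refine ⟨g₁.coprod g₂, LinearMap.ext fun ⟨p, p'⟩ => ?_⟩
    have e₁ := LinearMap.congr_fun hg₁ p
    have e₂ := LinearMap.congr_fun hg₂ p'
    simp only [LinearMap.coe_comp, Function.comp_apply, LinearMap.inl_apply,
      LinearMap.inr_apply] at e₁ e₂
    simp [e₁, e₂, ← map_add]

theorem exists_comp_mapRange_eq (hX : X ∈ Dclass σ) {J : Type*} (h : (J →₀ P) →ₗ[A] X) :
    ∃ G : (J →₀ Q) →ₗ[A] X, G ∘ₗ Finsupp.mapRange.linearMap σ.hom = h := by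
  rw [mem_Dclass_iff] at hX
  choose g hg using fun j => hX (h ∘ₗ Finsupp.lsingle j)
  refine ⟨Finsupp.lsum ℕ g, Finsupp.lhom_ext fun j p => ?_⟩
  simpa using LinearMap.congr_fun (hg j) p

end Dclass

section Complement

variable {P Q : ModuleCat.{u} A} (σ : P ⟶ Q)

noncomputable def bongartzPresentation :
    ((P →ₗ[A] A) →₀ P) →ₗ[A] A × ((P →ₗ[A] A) →₀ Q) :=
  (Finsupp.lsum ℕ id).prod (-Finsupp.mapRange.linearMap σ.hom)

abbrev BongartzComplement : Type u :=
  (A × ((P →ₗ[A] A) →₀ Q)) ⧸ LinearMap.range (bongartzPresentation σ)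

namespace BongartzComplement

noncomputable def inl : A →ₗ[A] BongartzComplement σ :=
  (LinearMap.range (bongartzPresentation σ)).mkQ ∘ₗ LinearMap.inl A _ _

noncomputable def inr : ((P →ₗ[A] A) →₀ Q) →ₗ[A] BongartzComplement σ :=
  (LinearMap.range (bongartzPresentation σ)).mkQ ∘ₗ LinearMap.inr A _ _

theorem inr_comp_mapRange :
    inr σ ∘ₗ Finsupp.mapRange.linearMap σ.hom = inl σ ∘ₗ Finsupp.lsum ℕ id := by
  refine LinearMap.ext fun x => (Submodule.Quotient.eq _).mpr ⟨-x, ?_⟩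
  rw [map_neg]
  simp [bongartzPresentation]

theorem inl_comp (a : P →ₗ[A] A) : inl σ ∘ₗ a = inr σ ∘ₗ Finsupp.lsingle a ∘ₗ σ.hom := by
  refine LinearMap.ext fun p => (Submodule.Quotient.eq _).mpr ⟨Finsupp.single a p, ?_⟩
  simp [bongartzPresentation]

theorem exists_comp_inl_eq {X : ModuleCat.{u} A} (hX : X ∈ Dclass σ) (h : A →ₗ[A] X) :
    ∃ φ : BongartzComplement σ →ₗ[A] X, φ ∘ₗ inl σ = h := by
  obtain ⟨G, hG⟩ := exists_comp_mapRange_eq hX (h ∘ₗ Finsupp.lsum ℕ id)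
  refine ⟨(LinearMap.range _).liftQ (h.coprod G) ?_, ?_⟩
  · rw [LinearMap.range_le_ker_iff, bongartzPresentation, LinearMap.coprod_comp_prod,
      LinearMap.comp_neg, hG, add_neg_cancel]
  · ext
    simp [inl]

theorem mem_Dclass [Module.Projective A P] [Module.Projective A Q] {T : ModuleCat.{u} A}
    (t : Q →ₗ[A] T) (ht : Exact σ.hom t) (ht' : Surjective t)
    (hT : ModuleCat.of A ((P →ₗ[A] A) →₀ T) ∈ Dclass σ) :
    ModuleCat.of A (BongartzComplement σ) ∈ Dclass σ := by
  rw [mem_Dclass_iff] at hT ⊢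
  intro f
  obtain ⟨l, hl⟩ := Module.projective_lifting_property _ f
    (LinearMap.range (bongartzPresentation σ)).mkQ_surjective
  set α := LinearMap.fst A _ _ ∘ₗ l
  set β := LinearMap.snd A _ _ ∘ₗ l
  have hf : f = inl σ ∘ₗ α + inr σ ∘ₗ β := by
    rw [← hl]
    ext p
    simp [α, β, inl, inr, ← Submodule.Quotient.mk_add]
  set tI := Finsupp.mapRange.linearMap (α := P →ₗ[A] A) t
  obtain ⟨h, hh⟩ := hT (tI ∘ₗ β)
  obtain ⟨h', hh'⟩ := Module.projective_lifting_property tI h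
    (Finsupp.mapRange_surjective _ (map_zero t) ht')
  obtain ⟨δ, hδ⟩ := Module.Projective.exists_comp_eq_of_range_le
    (Finsupp.mapRange.linearMap σ.hom) (β - h' ∘ₗ σ.hom) <| by
      rintro _ ⟨p, rfl⟩
      refine (ht.finsuppMapRange (map_zero _) (map_zero _) _).mp ?_
      have e₁ := LinearMap.congr_fun hh p
      have e₂ := LinearMap.congr_fun hh' (σ p)
      simp only [LinearMap.coe_comp, Function.comp_apply] at e₁ e₂
      change tI (β p - h' (σ p)) = 0
      rw [map_sub, e₂, e₁, sub_self]
  -- `α + u ∘ δ : P → A` is itself an index of the direct sum, which absorbs both `A`-parts.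
  refine ⟨inr σ ∘ₗ (Finsupp.lsingle (α + Finsupp.lsum ℕ id ∘ₗ δ) + h'), ?_⟩
  calc (inr σ ∘ₗ (Finsupp.lsingle (α + Finsupp.lsum ℕ id ∘ₗ δ) + h')) ∘ₗ σ.hom
      = inl σ ∘ₗ α + inl σ ∘ₗ Finsupp.lsum ℕ id ∘ₗ δ + inr σ ∘ₗ h' ∘ₗ σ.hom := by
        rw [LinearMap.comp_add, LinearMap.add_comp, LinearMap.comp_assoc, ← inl_comp,
          LinearMap.comp_add, LinearMap.comp_assoc]
    _ = inl σ ∘ₗ α + inr σ ∘ₗ (β - h' ∘ₗ σ.hom) + inr σ ∘ₗ h' ∘ₗ σ.hom := by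
        rw [← hδ, ← LinearMap.comp_assoc δ _ (inr σ), inr_comp_mapRange, LinearMap.comp_assoc]
    _ = f := by
        rw [hf, LinearMap.comp_sub]
        abel

end BongartzComplement

theorem mem_Dclass_bongartzPresentation {X : ModuleCat.{u} A} (hX : X ∈ Dclass σ) :
    X ∈ Dclass (ModuleCat.ofHom (bongartzPresentation σ)) := by
  rw [mem_Dclass_iff, ModuleCat.hom_ofHom]
  intro h
  obtain ⟨G, hG⟩ := exists_comp_mapRange_eq hX h
  refine ⟨LinearMap.coprod 0 (-G), ?_⟩
  rw [bongartzPresentation, LinearMap.coprod_comp_prod, LinearMap.zero_comp, zero_add,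
    LinearMap.neg_comp, LinearMap.comp_neg, neg_neg, hG]

theorem Dclass_subset_Gen_bongartzComplement :
    Dclass σ ⊆ Gen (ModuleCat.of A (BongartzComplement σ)) := fun X hX =>
  mem_Gen_of_forall_mem_range fun x => by
    obtain ⟨φ, hφ⟩ := BongartzComplement.exists_comp_inl_eq σ hX (LinearMap.toSpanSingleton A X x)
    exact ⟨φ, BongartzComplement.inl σ 1, by simpa using LinearMap.congr_fun hφ 1⟩

end Complement

theorem stmt_16_general {P Q : ModuleCat.{u} A} (hP : Projective P) (hQ : Projective Q)
    (σ : P ⟶ Q)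
    (hepi : ∀ X ∈ Dclass σ, ∀ (Y : ModuleCat.{u} A) (p : X ⟶ Y), Surjective p → Y ∈ Dclass σ)
    (hsum : ∀ (I : Type u) (X : I → ModuleCat.{u} A), (∀ i, X i ∈ Dclass σ) →
      ModuleCat.of A (DirectSum I (fun i => (X i : Type u))) ∈ Dclass σ)
    (hT : cokernel σ ∈ Dclass σ) :
    ∃ (M : ModuleCat.{u} A) (P' Q' : ModuleCat.{u} A)
      (_ : Projective P') (_ : Projective Q') (γ : P' ⟶ Q')
      (π : Q' ⟶ ModuleCat.of A (↑(cokernel σ) × ↑M)),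
      Surjective π ∧ Function.Exact ⇑γ ⇑π ∧ Dclass γ = Dclass σ ∧
      Gen (ModuleCat.of A (↑(cokernel σ) × ↑M)) = Dclass σ := by
  have : Module.Projective A P := (IsProjective.iff_projective P).mpr hP
  have : Module.Projective A Q := (IsProjective.iff_projective Q).mpr hQ
  have hπ : Surjective (cokernel.π σ) := (ModuleCat.epi_iff_surjective _).mp inferInstance
  have hM : ModuleCat.of A (BongartzComplement σ) ∈ Dclass σ :=
    BongartzComplement.mem_Dclass σ (cokernel.π σ).hom (ModuleCat.exact_cokernel_π σ) hπ
      (finsupp_mem_of_mem hepi hsum hT _)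
  refine ⟨ModuleCat.of A (BongartzComplement σ), ModuleCat.of A (P × ((P →ₗ[A] A) →₀ P)),
    ModuleCat.of A (Q × (A × ((P →ₗ[A] A) →₀ Q))), (IsProjective.iff_projective _).mp inferInstance,
    (IsProjective.iff_projective _).mp inferInstance,
    ModuleCat.ofHom (σ.hom.prodMap (bongartzPresentation σ)),
    ModuleCat.ofHom ((cokernel.π σ).hom.prodMap (LinearMap.range (bongartzPresentation σ)).mkQ),
    hπ.prodMap (Submodule.mkQ_surjective _),
    (ModuleCat.exact_cokernel_π σ).prodMap (LinearMap.exact_map_mkQ_range _), ?_, ?_⟩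
  · exact (Dclass_ofHom_prodMap σ (ModuleCat.ofHom (bongartzPresentation σ))).trans
      (Set.inter_eq_left.mpr fun X hX => mem_Dclass_bongartzPresentation σ hX)
  · refine (Gen_subset_of_mem hepi hsum (prod_mem_Dclass hT hM)).antisymm ?_
    exact (Dclass_subset_Gen_bongartzComplement σ).trans
      (Gen_subset_Gen_of_surjective (ModuleCat.ofHom (LinearMap.snd A _ _)) Prod.snd_surjective)

/-- Every partial silting module `T = coker σ` is a direct summand of a silting module
`T̄ = T ⊕ M` with `Gen T̄ = 𝒟_σ`, where `T̄` is silting with respect to a projective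
presentation `γ` satisfying `𝒟_γ = 𝒟_σ`. -/
theorem stmt_16 {P Q : ModuleCat.{u} A} (hP : Projective P) (hQ : Projective Q)
    (σ : P ⟶ Q)
    (hepi : ∀ X ∈ Dclass σ, ∀ (Y : ModuleCat.{u} A) (p : X ⟶ Y), Surjective p → Y ∈ Dclass σ)
    (hext : ∀ (X Y Z : ModuleCat.{u} A) (i : X ⟶ Y) (p : Y ⟶ Z), Injective i → Surjective p →
      Function.Exact ⇑i ⇑p → X ∈ Dclass σ → Z ∈ Dclass σ → Y ∈ Dclass σ)
    (hsum : ∀ (I : Type u) (X : I → ModuleCat.{u} A), (∀ i, X i ∈ Dclass σ) →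
      ModuleCat.of A (DirectSum I (fun i => (X i : Type u))) ∈ Dclass σ)
    (hT : cokernel σ ∈ Dclass σ) :
    ∃ (M : ModuleCat.{u} A) (P' Q' : ModuleCat.{u} A)
      (_ : Projective P') (_ : Projective Q') (γ : P' ⟶ Q')
      (π : Q' ⟶ ModuleCat.of A (↑(cokernel σ) × ↑M)),
      Surjective π ∧ Function.Exact ⇑γ ⇑π ∧ Dclass γ = Dclass σ ∧
      Gen (ModuleCat.of A (↑(cokernel σ) × ↑M)) = Dclass σ :=
  stmt_16_general hP hQ σ hepi hsum hT
end

section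
/- Let σ be a two-term complex of projective A-modules P₋₁ → P₀ (in degrees −1 and 0), viewed as an object of the derived category D(A), and let X be a complex with H^i(X) = 0 for all i > 0. Then Hom_{D(A)}(σ, X[1]) = 0 if and only if H^0(X) ∈ 𝒟_σ. In particular, 𝒟_σ equals the class of modules N with Hom_{D(A)}(σ, N[1]) = 0. -/
universe u

open CategoryTheory CategoryTheory.Limits Function

variable {A : Type u} [Ring A]

universe w

/-! A bounded complex of projectives such as `σ` is K-projective, so morphisms `σ ⟶ X[1]` in
`D(A)` are homotopy classes of chain maps `σ ⟶ W := X[1]`, where `H⁰(W) = H¹(X) = 0`. A chain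
map `φ` is null-homotopic iff, after correcting `φ⁰` through `d : W⁻¹ ⟶ W⁰` (possible as `P₀` is
projective and `H⁰(W) = 0`), the resulting class `P₋₁ ⟶ H⁻¹(W)` extends along `σ`. Since
every map `P₋₁ ⟶ H⁻¹(W) = H⁰(X)` is the class of such a chain map with `φ⁰ = 0`, the vanishing
of `Hom(σ, X[1])` is exactly the surjectivity of `Hom(σ, H⁰(X))`. -/

section

variable {C : Type*} [Category C]

lemma forall_eq_zero_iff_of_iso [HasZeroMorphisms C] {X Y Y' : C} (e : Y ≅ Y') :
    (∀ f : X ⟶ Y, f = 0) ↔ ∀ f : X ⟶ Y', f = 0 := by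
  simp only [← subsingleton_iff_forall_eq (0 : X ⟶ _)]
  exact ((Iso.refl X).homCongr e).subsingleton_congr

lemma surjective_precomp_iff_of_iso {P Q H H' : C} (d : P ⟶ Q) (e : H ≅ H') :
    Surjective (fun g : Q ⟶ H => d ≫ g) ↔ Surjective (fun g : Q ⟶ H' => d ≫ g) := by
  have : (fun g : Q ⟶ H' => d ≫ g) =
      (Iso.refl P).homCongr e ∘ (fun g : Q ⟶ H => d ≫ g) ∘ ((Iso.refl Q).homCongr e).symm := by
    ext g; simp
  rw [this, EquivLike.comp_surjective, EquivLike.surjective_comp]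

end

namespace HomologicalComplex

variable {C : Type*} [Category C] [Abelian C] {ι : Type*} {c : ComplexShape ι}
  (K : HomologicalComplex C c) {i j k : ι} {P : C} [Projective P]

lemma exists_comp_toCycles_eq (hi : c.prev j = i) (u : P ⟶ K.cycles j)
    (hu : u ≫ K.homologyπ j = 0) : ∃ v : P ⟶ K.X i, v ≫ K.toCycles i j = u :=
  have hS : (ShortComplex.mk _ _ (K.toCycles_comp_homologyπ i j)).Exact :=
    ShortComplex.exact_of_g_is_cokernel _ (K.homologyIsCokernel i j hi)
  ⟨hS.liftFromProjective u hu, hS.liftFromProjective_comp u hu⟩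

lemma exists_comp_d_eq_of_exactAt (hK : K.ExactAt j) (hi : c.prev j = i) (hk : c.next j = k)
    (u : P ⟶ K.X j) (hu : u ≫ K.d j k = 0) : ∃ v : P ⟶ K.X i, v ≫ K.d i j = u :=
  have hS := (K.exactAt_iff' i j k hi hk).1 hK
  ⟨hS.liftFromProjective u hu, hS.liftFromProjective_comp u hu⟩

end HomologicalComplex

namespace CochainComplex

open HomComplex

variable {C : Type*} [Category C] [Abelian C] {S : CochainComplex C ℤ}
  (hS : ∀ i : ℤ, i ≠ -1 → i ≠ 0 → IsZero (S.X i))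
include hS

lemma isKProjective_of_isZero_of_projective [Projective (S.X (-1))] [Projective (S.X 0)] :
    S.IsKProjective :=
  have : S.IsStrictlyLE 0 := (S.isStrictlyLE_iff 0).2 fun i hi ↦ hS i (by lia) (by lia)
  have (i : ℤ) : Projective (S.X i) := by
    by_cases h : i = -1
    · subst h; infer_instance
    by_cases h' : i = 0
    · subst h'; infer_instance
    exact (hS i h h').projective
  isKProjective_of_projective S 0

lemma exists_hom_f_eq_of_comp_d_eq_zero {W : CochainComplex C ℤ} (a : S.X (-1) ⟶ W.X (-1))
    (ha : a ≫ W.d (-1) 0 = 0) : ∃ φ : S ⟶ W, φ.f (-1) = a ∧ φ.f 0 = 0 := by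
  have hδ : δ 0 1 (Cochain.single a 0) = 0 := by
    rw [Cochain.δ_single a 0 1 rfl (-2) 0 (by norm_num) (by norm_num), ha,
      (hS (-2) (by norm_num) (by norm_num)).eq_of_src (S.d (-2) (-1)) 0]
    simp
  refine ⟨Cocycle.homOf (Cocycle.mk _ 1 rfl hδ), ?_, ?_⟩
  · simp
  · simp [Cochain.single_v_eq_zero]

lemma nonempty_homotopy_zero_iff {W : CochainComplex C ℤ} (φ : S ⟶ W) :
    Nonempty (Homotopy φ 0) ↔ ∃ (h₀ : S.X 0 ⟶ W.X (-1)) (h₁ : S.X (-1) ⟶ W.X (-2)),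
      φ.f 0 = h₀ ≫ W.d (-1) 0 ∧ φ.f (-1) = S.d (-1) 0 ≫ h₀ + h₁ ≫ W.d (-2) (-1) := by
  have hd : S.d 0 1 = 0 := (hS 1 (by norm_num) (by norm_num)).eq_of_tgt _ _
  constructor
  · rintro ⟨H⟩
    obtain ⟨z, hz⟩ := Cochain.equivHomotopy φ 0 H
    have h0 := Cochain.congr_v hz 0 0 rfl
    have h1 := Cochain.congr_v hz (-1) (-1) rfl
    rw [Cochain.add_v, δ_v (-1) 0 rfl z 0 0 rfl (-1) 1 rfl rfl] at h0
    rw [Cochain.add_v, δ_v (-1) 0 rfl z (-1) (-1) rfl (-2) 0 rfl rfl] at h1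
    refine ⟨z.v 0 (-1) rfl, z.v (-1) (-2) rfl, ?_, ?_⟩
    · simpa [hd] using h0
    · simpa [add_comm] using h1
  · rintro ⟨h₀, h₁, h0, h1⟩
    refine ⟨(Cochain.equivHomotopy φ 0).symm
      ⟨Cochain.single h₀ (-1) + Cochain.single h₁ (-1), Cochain.ext₀ _ _ fun p ↦ ?_⟩⟩
    rw [Cochain.add_v, δ_v (-1) 0 rfl _ p p (add_zero p) (p - 1) (p + 1) rfl rfl]
    by_cases hp : p = 0
    · subst hp
      simp [Cochain.single_v_eq_zero, hd, h0]
    by_cases hp' : p = -1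
    · subst hp'
      simp [Cochain.single_v_eq_zero, h1, add_comm]
    exact (hS p hp' hp).eq_of_src _ _

lemma surjective_of_forall_nonempty_homotopy_zero [Projective (S.X (-1))]
    {W : CochainComplex C ℤ} (hnull : ∀ φ : S ⟶ W, Nonempty (Homotopy φ 0)) :
    Surjective (fun g : S.X 0 ⟶ W.homology (-1) ↦ S.d (-1) 0 ≫ g) := by
  intro g
  obtain ⟨g', rfl⟩ := Projective.factors g (W.homologyπ (-1))
  obtain ⟨φ, hφ₁, hφ₀⟩ := exists_hom_f_eq_of_comp_d_eq_zero hS (g' ≫ W.iCycles (-1)) (by simp)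
  obtain ⟨h₀, h₁, h0, h1⟩ := (nonempty_homotopy_zero_iff hS φ).1 (hnull φ)
  have hc : h₀ ≫ W.d (-1) 0 = 0 := by rw [← h0, hφ₀]
  refine ⟨W.liftCycles h₀ 0 (by simp) hc ≫ W.homologyπ (-1), ?_⟩
  have : g' = S.d (-1) 0 ≫ W.liftCycles h₀ 0 (by simp) hc + h₁ ≫ W.toCycles (-2) (-1) := by
    rw [← cancel_mono (W.iCycles (-1))]
    simp [← hφ₁, h1]
  simp [this]

lemma nonempty_homotopy_zero_of_surjective [Projective (S.X (-1))] [Projective (S.X 0)]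
    {W : CochainComplex C ℤ} (hW : IsZero (W.homology 0))
    (hsurj : Surjective (fun g : S.X 0 ⟶ W.homology (-1) ↦ S.d (-1) 0 ≫ g)) (φ : S ⟶ W) :
    Nonempty (Homotopy φ 0) := by
  rw [nonempty_homotopy_zero_iff hS]
  have hφ0 : φ.f 0 ≫ W.d 0 1 = 0 := by
    rw [φ.comm, (hS 1 (by norm_num) (by norm_num)).eq_of_tgt (S.d 0 1) 0, zero_comp]
  obtain ⟨k, hk⟩ := W.exists_comp_d_eq_of_exactAt (i := -1) (k := 1)
    ((W.exactAt_iff_isZero_homology 0).2 hW) (by simp) (by simp) (φ.f 0) hφ0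
  let w := W.liftCycles (φ.f (-1) - S.d (-1) 0 ≫ k) 0 (by simp) (by simp [hk, φ.comm])
  obtain ⟨g, hg⟩ := hsurj (w ≫ W.homologyπ (-1))
  obtain ⟨g', rfl⟩ := Projective.factors g (W.homologyπ (-1))
  obtain ⟨m, hm⟩ := W.exists_comp_toCycles_eq (i := -2) (by simp) (w - S.d (-1) 0 ≫ g')
    (by simpa [sub_eq_zero] using hg.symm)
  refine ⟨k + g' ≫ W.iCycles (-1), m, by simp [hk], ?_⟩
  have := congr($hm ≫ W.iCycles (-1))
  simp only [Category.assoc, HomologicalComplex.toCycles_i, Preadditive.sub_comp,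
    HomologicalComplex.liftCycles_i, w] at this
  rw [this, Preadditive.comp_add]
  abel

lemma forall_nonempty_homotopy_zero_iff [Projective (S.X (-1))] [Projective (S.X 0)]
    {W : CochainComplex C ℤ} (hW : IsZero (W.homology 0)) :
    (∀ φ : S ⟶ W, Nonempty (Homotopy φ 0)) ↔
      Surjective (fun g : S.X 0 ⟶ W.homology (-1) ↦ S.d (-1) 0 ≫ g) :=
  ⟨surjective_of_forall_nonempty_homotopy_zero hS, nonempty_homotopy_zero_of_surjective hS hW⟩

end CochainComplex

namespace DerivedCategory

variable {C : Type*} [Category C] [Abelian C] [HasDerivedCategory C]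

lemma forall_eq_zero_iff_of_isKProjective (K L : CochainComplex C ℤ) [K.IsKProjective] :
    (∀ f : Q.obj K ⟶ Q.obj L, f = 0) ↔ ∀ φ : K ⟶ L, Nonempty (Homotopy φ 0) := by
  let e := quotientCompQhIso C
  have hQh := CochainComplex.IsKProjective.Qh_map_bijective K
    ((HomotopyCategory.quotient _ _).obj L)
  calc (∀ f : Q.obj K ⟶ Q.obj L, f = 0)
      ↔ Subsingleton (Q.obj K ⟶ Q.obj L) := (subsingleton_iff_forall_eq 0).symm
    _ ↔ Subsingleton
        ((HomotopyCategory.quotient _ _).obj K ⟶ (HomotopyCategory.quotient _ _).obj L) :=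
      (((e.app K).homCongr (e.app L)).symm.trans (Equiv.ofBijective _ hQh).symm).subsingleton_congr
    _ ↔ ∀ φ : K ⟶ L, Nonempty (Homotopy φ 0) := by
      rw [subsingleton_iff_forall_eq 0]
      exact (HomotopyCategory.quotient _ _).map_surjective.forall.trans
        (forall_congr' HomotopyCategory.quotient_map_eq_zero_iff)

variable {S : CochainComplex C ℤ} (hS : ∀ i : ℤ, i ≠ -1 → i ≠ 0 → IsZero (S.X i))
  [Projective (S.X (-1))] [Projective (S.X 0)]
include hS

lemma forall_eq_zero_shift_one_iff_surjective (X : CochainComplex C ℤ)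
    (hX : IsZero (X.homology 1)) :
    (∀ f : Q.obj S ⟶ (Q.obj X)⟦(1 : ℤ)⟧, f = 0) ↔
      Surjective (fun g : S.X 0 ⟶ X.homology 0 ↦ S.d (-1) 0 ≫ g) := by
  have := CochainComplex.isKProjective_of_isZero_of_projective hS
  let shiftIso (a a' : ℤ) (h : 1 + a = a') : (X⟦(1 : ℤ)⟧).homology a ≅ X.homology a' :=
    ((HomologicalComplex.homologyFunctor C (ComplexShape.up ℤ) 0).shiftIso 1 a a' h).app X
  refine (forall_eq_zero_iff_of_iso ((Q.commShiftIso (1 : ℤ)).app X)).symm.trans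
    ((forall_eq_zero_iff_of_isKProjective S (X⟦(1 : ℤ)⟧)).trans ?_)
  rw [← surjective_precomp_iff_of_iso _ (shiftIso (-1) 0 rfl)]
  exact CochainComplex.forall_nonempty_homotopy_zero_iff hS (hX.of_iso (shiftIso 0 1 rfl))

end DerivedCategory

open DerivedCategory in
/-- For a two-term complex `σ` of projectives (in degrees `-1, 0`) and a complex `X` with
`H^i(X) = 0` for `i > 0`: `Hom_{D(A)}(σ, X[1]) = 0` iff `H^0(X) ∈ 𝒟_σ`; in particular
`𝒟_σ` is the class of modules `N` with `Hom_{D(A)}(σ, N[1]) = 0`. -/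
theorem stmt_17 [HasDerivedCategory.{w} (ModuleCat.{u} A)]
    (S : CochainComplex (ModuleCat.{u} A) ℤ)
    (hbounds : ∀ i : ℤ, i ≠ -1 → i ≠ 0 → IsZero (S.X i))
    (hPm : Projective (S.X (-1))) (hP0 : Projective (S.X 0))
    (X : CochainComplex (ModuleCat.{u} A) ℤ)
    (hX : ∀ i : ℤ, 0 < i → IsZero (X.homology i)) :
    ((∀ f : Q.obj S ⟶ (Q.obj X)⟦(1 : ℤ)⟧, f = 0) ↔
      Surjective (fun g : S.X 0 ⟶ X.homology 0 => S.d (-1) 0 ≫ g)) ∧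
    (∀ N : ModuleCat.{u} A,
      (∀ f : Q.obj S ⟶
          (Q.obj ((HomologicalComplex.single (ModuleCat.{u} A)
            (ComplexShape.up ℤ) 0).obj N))⟦(1 : ℤ)⟧, f = 0) ↔
      Surjective (fun g : S.X 0 ⟶ N => S.d (-1) 0 ≫ g)) := by
  refine ⟨forall_eq_zero_shift_one_iff_surjective hbounds X (hX 1 one_pos), fun N ↦ ?_⟩
  rw [forall_eq_zero_shift_one_iff_surjective hbounds _
    (HomologicalComplex.isZero_single_obj_homology _ 0 N 1 one_ne_zero)]
  exact surjective_precomp_iff_of_iso _ (HomologicalComplex.singleObjHomologySelfIso _ 0 N)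
end

section
/- Let σ: P₋₁ → P₀ be a two-term complex of projective A-modules with T = H^0(σ) = coker(σ), and let X be a complex with H^i(X) = 0 for all i < 0. Then Hom_{D(A)}(σ, X[i]) = 0 for all i ≤ 0 if and only if Hom_A(T, H^0(X)) = 0. -/
universe u

open CategoryTheory CategoryTheory.Limits Function

variable {A : Type u} [Ring A]

universe w

/-!
The complex `σ` is a bounded complex of projectives, hence K-projective, so morphisms `σ ⟶ Y` in
`D(A)` are homotopy classes of chain maps. When `H⁻¹(Y) = 0`, a chain map `f : σ ⟶ Y` is
null-homotopic iff `f⁰` factors through `d_Y⁻¹` (the other component of the homotopy is a lift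
against the exactness of `Y` at `-1`), i.e. iff the class of `f⁰` in `H⁰(Y)` vanishes. These
classes are the maps `T = coker σ ⟶ H⁰(Y)`, and by projectivity of `P₀` and `P₋₁` every such map
arises from a chain map. For `Y = X[i]` one has `H⁰(Y) = Hⁱ(X)`, which vanishes when `i < 0`.
-/

namespace HomologicalComplex

variable {C ι : Type*} [Category* C] [Abelian C] {c : ComplexShape ι} {K : HomologicalComplex C c}

lemma exists_comp_d_eq_iff_liftCycles_comp_homologyπ_eq_zero {i j k : ι}
    (hi : c.prev j = i) (hk : c.next j = k) {P : C} [Projective P] (x : P ⟶ K.X j)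
    (hx : x ≫ K.d j k = 0) :
    (∃ y : P ⟶ K.X i, y ≫ K.d i j = x) ↔ K.liftCycles x k hk hx ≫ K.homologyπ j = 0 := by
  rw [K.liftCycles_comp_homologyπ_eq_zero_iff_up_to_refinements i j k hi hk]
  constructor
  · rintro ⟨y, rfl⟩
    exact ⟨P, 𝟙 P, inferInstance, y, by simp⟩
  · rintro ⟨P', π, _, y, hy⟩
    refine ⟨Projective.factorThru (𝟙 P) π ≫ y, ?_⟩
    rw [Category.assoc, ← hy, ← Category.assoc, Projective.factorThru_comp, Category.id_comp]

lemma ExactAt.exists_comp_d_eq {i j k : ι} (hK : K.ExactAt j) (hi : c.prev j = i)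
    (hk : c.next j = k) {P : C} [Projective P] (x : P ⟶ K.X j) (hx : x ≫ K.d j k = 0) :
    ∃ y : P ⟶ K.X i, y ≫ K.d i j = x :=
  (exists_comp_d_eq_iff_liftCycles_comp_homologyπ_eq_zero hi hk x hx).2
    (hK.isZero_homology.eq_of_tgt _ _)

end HomologicalComplex

lemma CategoryTheory.Limits.forall_eq_zero_iff_of_iso {D : Type*} [Category* D]
    [HasZeroMorphisms D] {A A' B B' : D} (e₁ : A ≅ A') (e₂ : B ≅ B') :
    (∀ f : A ⟶ B, f = 0) ↔ ∀ f : A' ⟶ B', f = 0 :=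
  (e₁.homCongr e₂).forall_congr fun f =>
    ⟨fun hf => by simp [hf], fun hf => by simpa using e₁.hom ≫= hf =≫ e₂.inv⟩

namespace CochainComplex

variable {C : Type*} [Category* C] [Abelian C]

lemma isKProjective_of_isZero_of_projective_s18 {S : CochainComplex C ℤ}
    (hS : ∀ i : ℤ, i ≠ -1 → i ≠ 0 → IsZero (S.X i))
    [Projective (S.X (-1))] [Projective (S.X 0)] : S.IsKProjective := by
  have : S.IsStrictlyLE 0 := (S.isStrictlyLE_iff 0).2 fun i hi => hS i (by omega) (by omega)
  have (i : ℤ) : Projective (S.X i) := by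
    by_cases h₁ : i = -1
    · subst h₁; infer_instance
    by_cases h₀ : i = 0
    · subst h₀; infer_instance
    exact (hS i h₁ h₀).projective
  exact isKProjective_of_projective S 0

namespace IsKProjective

open DerivedCategory

variable [HasDerivedCategory.{w} C] {K L : CochainComplex C ℤ} [K.IsKProjective]

lemma Q_map_surjective : Surjective (Q.map : (K ⟶ L) → (Q.obj K ⟶ Q.obj L)) := by
  intro φ
  obtain ⟨ψ, hψ⟩ := (Qh_map_bijective K ((HomotopyCategory.quotient _ _).obj L)).2
    ((quotientCompQhIso C).hom.app K ≫ φ ≫ (quotientCompQhIso C).inv.app L)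
  obtain ⟨f, rfl⟩ := (HomotopyCategory.quotient _ _).map_surjective ψ
  refine ⟨f, ?_⟩
  rw [← cancel_epi ((quotientCompQhIso C).hom.app K), ← quotientCompQhIso_hom_naturality, hψ]
  simp

lemma Q_map_eq_zero_iff (f : K ⟶ L) : Q.map f = 0 ↔ Nonempty (Homotopy f 0) := by
  rw [← HomotopyCategory.quotient_map_eq_zero_iff,
    ← (Qh_map_bijective K ((HomotopyCategory.quotient _ _).obj L)).1.eq_iff, Functor.map_zero,
    ← cancel_mono ((quotientCompQhIso C).hom.app L), quotientCompQhIso_hom_naturality]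
  simp

lemma forall_eq_zero_iff_nonempty_homotopy :
    (∀ φ : Q.obj K ⟶ Q.obj L, φ = 0) ↔ ∀ f : K ⟶ L, Nonempty (Homotopy f 0) :=
  ⟨fun h f => (Q_map_eq_zero_iff f).1 (h _), fun h φ => by
    obtain ⟨f, rfl⟩ := Q_map_surjective φ
    exact (Q_map_eq_zero_iff f).2 (h f)⟩

end IsKProjective

open HomologicalComplex

variable {S Y : CochainComplex C ℤ}

noncomputable def homOfTwoTerm (hS : ∀ i : ℤ, i ≠ -1 → i ≠ 0 → IsZero (S.X i))
    (f₁ : S.X (-1) ⟶ Y.X (-1)) (f₀ : S.X 0 ⟶ Y.X 0)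
    (comm : f₁ ≫ Y.d (-1) 0 = S.d (-1) 0 ≫ f₀) (hf₀ : f₀ ≫ Y.d 0 1 = 0) : S ⟶ Y where
  f i :=
    if h₁ : i = -1 then (S.XIsoOfEq h₁).hom ≫ f₁ ≫ (Y.XIsoOfEq h₁).inv
    else if h₀ : i = 0 then (S.XIsoOfEq h₀).hom ≫ f₀ ≫ (Y.XIsoOfEq h₀).inv
    else 0
  comm' i j hij := by
    simp only [ComplexShape.up_Rel] at hij
    subst hij
    by_cases h₁ : i = -1
    · subst h₁
      simp [XIsoOfEq, comm]
    by_cases h₀ : i = 0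
    · subst h₀
      simp [XIsoOfEq, hf₀]
    exact (hS i h₁ h₀).eq_of_src _ _

@[simp]
lemma homOfTwoTerm_f_zero (hS : ∀ i : ℤ, i ≠ -1 → i ≠ 0 → IsZero (S.X i))
    (f₁ : S.X (-1) ⟶ Y.X (-1)) (f₀ : S.X 0 ⟶ Y.X 0)
    (comm : f₁ ≫ Y.d (-1) 0 = S.d (-1) 0 ≫ f₀) (hf₀ : f₀ ≫ Y.d 0 1 = 0) :
    (homOfTwoTerm hS f₁ f₀ comm hf₀).f 0 = f₀ := by
  simp [homOfTwoTerm, XIsoOfEq]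

lemma nonempty_homotopy_zero_of_twoTerm (hS : ∀ i : ℤ, i ≠ -1 → i ≠ 0 → IsZero (S.X i))
    (f : S ⟶ Y) (h₀ : S.X 0 ⟶ Y.X (-1)) (h₁ : S.X (-1) ⟶ Y.X (-2)) (hf₀ : f.f 0 = h₀ ≫ Y.d (-1) 0)
    (hf₁ : f.f (-1) = S.d (-1) 0 ≫ h₀ + h₁ ≫ Y.d (-2) (-1)) : Nonempty (Homotopy f 0) := by
  let hom (i j : ℤ) : S.X i ⟶ Y.X j :=
    if h : i = 0 ∧ j = -1 then (S.XIsoOfEq h.1).hom ≫ h₀ ≫ (Y.XIsoOfEq h.2).inv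
    else if h : i = -1 ∧ j = -2 then (S.XIsoOfEq h.1).hom ≫ h₁ ≫ (Y.XIsoOfEq h.2).inv
    else 0
  have hom₀ : hom 0 (-1) = h₀ := by simp [hom, XIsoOfEq]
  have hom₁ : hom (-1) (-2) = h₁ := by norm_num [hom, XIsoOfEq]
  have hom_eq_zero (i j : ℤ) (h : ¬(i = 0 ∧ j = -1)) (h' : ¬(i = -1 ∧ j = -2)) :
      hom i j = 0 := by
    simp only [hom, dif_neg h, dif_neg h']
  refine ⟨⟨hom, fun i j hij => hom_eq_zero i j ?_ ?_, fun i => ?_⟩⟩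
  · rintro ⟨rfl, rfl⟩; simp at hij
  · rintro ⟨rfl, rfl⟩; simp at hij
  by_cases h₁ : i = -1
  · subst h₁
    rw [dNext_eq _ (show (ComplexShape.up ℤ).Rel (-1) 0 by simp),
      prevD_eq _ (show (ComplexShape.up ℤ).Rel (-2) (-1) by simp), hom₀, hom₁, hf₁]
    simp
  by_cases h₀ : i = 0
  · subst h₀
    rw [dNext_eq _ (show (ComplexShape.up ℤ).Rel 0 1 by simp),
      prevD_eq _ (show (ComplexShape.up ℤ).Rel (-1) 0 by simp),
      hom_eq_zero 1 0 (by omega) (by omega), hom₀, hf₀]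
    simp
  exact (hS i h₁ h₀).eq_of_src _ _

lemma nonempty_homotopy_zero_iff_of_twoTerm (hS : ∀ i : ℤ, i ≠ -1 → i ≠ 0 → IsZero (S.X i))
    [Projective (S.X (-1))] (hY : Y.ExactAt (-1)) (f : S ⟶ Y) :
    Nonempty (Homotopy f 0) ↔ ∃ h₀ : S.X 0 ⟶ Y.X (-1), h₀ ≫ Y.d (-1) 0 = f.f 0 := by
  constructor
  · rintro ⟨H⟩
    refine ⟨H.hom 0 (-1), ?_⟩
    have := H.comm 0
    rw [dNext_eq _ (show (ComplexShape.up ℤ).Rel 0 1 by simp),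
      prevD_eq _ (show (ComplexShape.up ℤ).Rel (-1) 0 by simp),
      (hS 1 (by omega) (by omega)).eq_of_tgt (S.d 0 1) 0] at this
    simpa using this.symm
  · rintro ⟨h₀, hh₀⟩
    have hq : (f.f (-1) - S.d (-1) 0 ≫ h₀) ≫ Y.d (-1) 0 = 0 := by
      rw [Preadditive.sub_comp, Category.assoc, hh₀, f.comm, sub_self]
    obtain ⟨h₁, hh₁⟩ := hY.exists_comp_d_eq (i := -2) (by simp) (by simp) _ hq
    exact nonempty_homotopy_zero_of_twoTerm hS f h₀ h₁ hh₀.symm (by rw [hh₁]; abel)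

lemma forall_exists_comp_d_eq_iff_of_twoTerm (hS : ∀ i : ℤ, i ≠ -1 → i ≠ 0 → IsZero (S.X i))
    [Projective (S.X (-1))] [Projective (S.X 0)] :
    (∀ f : S ⟶ Y, ∃ h₀ : S.X 0 ⟶ Y.X (-1), h₀ ≫ Y.d (-1) 0 = f.f 0) ↔
      ∀ g : cokernel (S.d (-1) 0) ⟶ Y.homology 0, g = 0 := by
  constructor
  · intro hlift g
    let c : S.X 0 ⟶ Y.cycles 0 :=
      Projective.factorThru (cokernel.π (S.d (-1) 0) ≫ g) (Y.homologyπ 0)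
    -- `π ≫ g` will be the class of the degree-zero component of a chain map `S ⟶ Y`
    have hc : c ≫ Y.homologyπ 0 = cokernel.π (S.d (-1) 0) ≫ g := Projective.factorThru_comp _ _
    have hc' {P : C} (z : P ⟶ Y.cycles 0) :
        Y.liftCycles (z ≫ Y.iCycles 0) 1 (by simp) (by simp) = z := by
      rw [← cancel_mono (Y.iCycles 0), liftCycles_i]
    obtain ⟨y, hy⟩ :
        ∃ y : S.X (-1) ⟶ Y.X (-1), y ≫ Y.d (-1) 0 = (S.d (-1) 0 ≫ c) ≫ Y.iCycles 0 := by
      rw [exists_comp_d_eq_iff_liftCycles_comp_homologyπ_eq_zero (i := -1) (k := 1) (by simp)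
        (by simp) _ (by simp), hc', Category.assoc, hc, cokernel.condition_assoc, zero_comp]
    obtain ⟨h₀, hh₀⟩ :=
      hlift (homOfTwoTerm hS y (c ≫ Y.iCycles 0) (hy.trans (Category.assoc _ _ _)) (by simp))
    rw [homOfTwoTerm_f_zero] at hh₀
    have hc₀ := (exists_comp_d_eq_iff_liftCycles_comp_homologyπ_eq_zero (i := -1) (k := 1)
      (by simp) (by simp) (c ≫ Y.iCycles 0) (by simp)).1 ⟨h₀, hh₀⟩
    rw [hc', hc] at hc₀
    rwa [← cancel_epi (cokernel.π (S.d (-1) 0)), comp_zero]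
  · intro hT f
    have hf₀ : f.f 0 ≫ Y.d 0 1 = 0 := by
      rw [f.comm, (hS 1 (by omega) (by omega)).eq_of_tgt (S.d 0 1) 0, zero_comp]
    rw [exists_comp_d_eq_iff_liftCycles_comp_homologyπ_eq_zero (i := -1) (k := 1) (by simp)
      (by simp) _ hf₀]
    have hσ : S.d (-1) 0 ≫ Y.liftCycles (f.f 0) 1 (by simp) hf₀ ≫ Y.homologyπ 0 = 0 := by
      rw [← Category.assoc, Y.comp_liftCycles]
      exact Y.liftCycles_homologyπ_eq_zero_of_boundary _ 1 (by simp) (f.f (-1))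
        (f.comm (-1) 0).symm
    simpa using cokernel.π _ ≫= hT (cokernel.desc _ _ hσ)

open DerivedCategory in
lemma forall_Q_obj_eq_zero_iff_of_twoTerm [HasDerivedCategory.{w} C]
    (hS : ∀ i : ℤ, i ≠ -1 → i ≠ 0 → IsZero (S.X i))
    [Projective (S.X (-1))] [Projective (S.X 0)] (hY : Y.ExactAt (-1)) :
    (∀ φ : Q.obj S ⟶ Q.obj Y, φ = 0) ↔ ∀ g : cokernel (S.d (-1) 0) ⟶ Y.homology 0, g = 0 := by
  have := isKProjective_of_isZero_of_projective_s18 hS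
  rw [IsKProjective.forall_eq_zero_iff_nonempty_homotopy,
    ← forall_exists_comp_d_eq_iff_of_twoTerm hS]
  exact forall_congr' (nonempty_homotopy_zero_iff_of_twoTerm hS hY)

end CochainComplex

open DerivedCategory in
/-- For a two-term complex `σ` of projectives (degrees `-1, 0`) with `T = H⁰(σ) = coker σ`
and a complex `X` with `H^i(X) = 0` for `i < 0`: `Hom_{D(A)}(σ, X[i]) = 0` for all `i ≤ 0`
iff `Hom_A(T, H⁰(X)) = 0`. -/
theorem stmt_18 [HasDerivedCategory.{w} (ModuleCat.{u} A)]
    (S : CochainComplex (ModuleCat.{u} A) ℤ)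
    (hbounds : ∀ i : ℤ, i ≠ -1 → i ≠ 0 → IsZero (S.X i))
    (hPm : Projective (S.X (-1))) (hP0 : Projective (S.X 0))
    (X : CochainComplex (ModuleCat.{u} A) ℤ)
    (hX : ∀ i : ℤ, i < 0 → IsZero (X.homology i)) :
    ((∀ i : ℤ, i ≤ 0 → ∀ f : Q.obj S ⟶ (Q.obj X)⟦i⟧, f = 0) ↔
      (∀ g : cokernel (S.d (-1) 0) ⟶ X.homology 0, g = 0)) := by
  have : X.IsGE 0 := (X.isGE_iff 0).2 fun i hi => (X.exactAt_iff_isZero_homology i).2 (hX i hi)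
  have key (i : ℤ) (hi : i ≤ 0) : (∀ f : Q.obj S ⟶ (Q.obj X)⟦i⟧, f = 0) ↔
      ∀ g : cokernel (S.d (-1) 0) ⟶ X.homology i, g = 0 := by
    have : (X⟦i⟧).IsGE (-i) := X.isGE_shift 0 i (-i) (by omega)
    calc (∀ f : Q.obj S ⟶ (Q.obj X)⟦i⟧, f = 0)
        ↔ ∀ f : Q.obj S ⟶ Q.obj (X⟦i⟧), f = 0 :=
          forall_eq_zero_iff_of_iso (Iso.refl _) ((Q.commShiftIso i).symm.app X)
      _ ↔ ∀ g : cokernel (S.d (-1) 0) ⟶ (X⟦i⟧).homology 0, g = 0 :=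
          CochainComplex.forall_Q_obj_eq_zero_iff_of_twoTerm hbounds
            ((X⟦i⟧).exactAt_of_isGE (-i) (-1))
      _ ↔ ∀ g : cokernel (S.d (-1) 0) ⟶ X.homology i, g = 0 :=
          forall_eq_zero_iff_of_iso (Iso.refl _)
            ((CochainComplex.ShiftSequence.shiftIso _ i 0 i (add_zero i)).app X)
  constructor
  · exact fun hD => (key 0 le_rfl).1 (hD 0 le_rfl)
  · intro hT i hi
    obtain rfl | hlt := hi.eq_or_lt
    · exact (key 0 le_rfl).2 hT
    · exact (key i hi).2 fun g => (hX i hlt).eq_of_tgt g 0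
end
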